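/- arXiv:2004.12005 — 6 statements merged into one kernel-verified Lean document; each statement's English description precedes it below -/
import Mathlib

section
/- Let M ≤ N be integers, γ a measure on ℤ with mass function q positive on a contiguous support containing ⟦M,N⟧, and h : ⟦M,N⟧ → ℝ an arbitrary function. Let 𝒫ₕᵞ(⟦M,N⟧) denote the set of probability distributions supported on ⟦M,N⟧ that are log-concave with respect to γ and satisfy E[h(X)] ≥ 0. If a probability distribution P_X is an extreme point of the convex hull Conv(𝒫ₕᵞ(⟦M,N⟧)), then its probability mass function f with respect to γ has the form f(n) = C·pⁿ·1_{⟦k,l⟧}(n) for some constants C, p > 0 and integers M ≤ k ≤ l ≤ N. -/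
/-!
For a member `p` of the set, the ratio `g = p / q` is positive exactly on an interval `⟦k, l⟧`. If
the log-concavity inequality for `g` were strict at some `m` inside it, `p` could be moved to
`p · (1 ± s V)` with `V` piecewise affine, with a single kink at `m`: its three coefficients can be
chosen, against two linear constraints, to keep the total mass and `E[h(X)]` unchanged. Away from
`m` an affine factor cannot destroy log-concavity, and at `m` the strict inequality survives small
`s`, so `p` would be the midpoint of two distinct members. Hence equality holds throughout
`⟦k, l⟧`, which makes `g` geometric there.
-/

/-- The support of `f : ℤ → ℝ` is contiguous. -/
def ContigSupportInt (f : ℤ → ℝ) : Prop :=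
  ∀ a b c : ℤ, a ≤ b → b ≤ c → 0 < f a → 0 < f c → 0 < f b

/-- A p.m.f. `p` is log-concave with respect to the reference mass function `q`:
the ratio `p/q` satisfies `(p/q)(n)² ≥ (p/q)(n-1)·(p/q)(n+1)` for all `n` and has
contiguous support. -/
def IsLogConcaveWrt (q p : ℤ → ℝ) : Prop :=
  (∀ n : ℤ, (p (n - 1) / q (n - 1)) * (p (n + 1) / q (n + 1)) ≤ (p n / q n) ^ 2) ∧
    ContigSupportInt (fun n => p n / q n)

/-- `𝒫ₕᵞ(⟦M,N⟧)`: probability mass functions supported on `⟦M,N⟧`, log-concave with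
respect to `q`, with `E[h(X)] ≥ 0`. -/
def LCPmfSet (q : ℤ → ℝ) (M N : ℤ) (h : ℤ → ℝ) : Set (ℤ → ℝ) :=
  { p | (∀ n, 0 ≤ p n) ∧ (∀ n : ℤ, n ∉ Finset.Icc M N → p n = 0) ∧
      (∑ n ∈ Finset.Icc M N, p n) = 1 ∧ IsLogConcaveWrt q p ∧
      0 ≤ ∑ n ∈ Finset.Icc M N, h n * p n }

open Filter Topology Finset

lemma Matrix.exists_ne_zero_mulVec_eq_zero_of_card_lt {K m n : Type*} [Field K] [Fintype m]
    [Fintype n] (A : Matrix m n K) (h : Fintype.card m < Fintype.card n) :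
    ∃ v ≠ 0, A.mulVec v = 0 := by
  have hker : LinearMap.ker A.mulVecLin ≠ ⊥ :=
    LinearMap.ker_ne_bot_of_finrank_lt (by simpa only [Module.finrank_fintype_fun_eq_card] using h)
  obtain ⟨v, hv, hv0⟩ := (Submodule.ne_bot_iff _).1 hker
  exact ⟨v, hv0, by simpa using hv⟩

lemma exists_ne_zero_sum_mul_sum_eq_zero {α ι κ : Type*} [Fintype ι] [Fintype κ] (s : Finset α)
    (w : κ → α → ℝ) (b : ι → α → ℝ) (h : Fintype.card κ < Fintype.card ι) :
    ∃ c : ι → ℝ, c ≠ 0 ∧ ∀ j, ∑ x ∈ s, w j x * ∑ i, c i * b i x = 0 := by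
  obtain ⟨c, hc, hAc⟩ :=
    (Matrix.of fun j i => ∑ x ∈ s, w j x * b i x).exists_ne_zero_mulVec_eq_zero_of_card_lt h
  refine ⟨c, hc, fun j => ?_⟩
  have := congrFun hAc j
  simp only [Matrix.mulVec, dotProduct, Matrix.of_apply, sum_mul, mul_sum, Pi.zero_apply]
    at this ⊢
  rw [sum_comm]
  simpa only [mul_comm (c _), mul_assoc] using this

lemma eq_zero_of_mem_extremePoints_of_eventually_add_smul_mem {E : Type*} [AddCommGroup E]
    [Module ℝ E] {A : Set E} {x u : E} (hx : x ∈ A.extremePoints ℝ)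
    (hu : ∀ᶠ s in 𝓝 (0 : ℝ), x + s • u ∈ A) : u = 0 := by
  have hneg : ∀ᶠ s in 𝓝 (0 : ℝ), x + (-s) • u ∈ A :=
    (continuous_neg.tendsto' 0 0 neg_zero).eventually hu
  obtain ⟨ε, hε, hεu, hεu'⟩ := (hu.and hneg).exists_gt
  have hseg : x ∈ openSegment ℝ (x + ε • u) (x + (-ε) • u) :=
    ⟨1 / 2, 1 / 2, by norm_num, by norm_num, by norm_num, by module⟩
  have := hx.2 hεu hεu' hseg
  simpa [hε.ne'] using this

lemma ContigSupportInt.exists_pos_iff_mem_Icc {f : ℤ → ℝ} (hf : ContigSupportInt f) {M N : ℤ}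
    (hsupp : ∀ n, 0 < f n → n ∈ Set.Icc M N) (hne : ∃ n, 0 < f n) :
    ∃ k l, M ≤ k ∧ k ≤ l ∧ l ≤ N ∧ ∀ n, 0 < f n ↔ n ∈ Set.Icc k l := by
  classical
  set S := (Icc M N).filter (0 < f ·)
  have hS : ∀ n, n ∈ S ↔ 0 < f n := fun n => by
    simpa [S, and_iff_right_iff_imp] using hsupp n
  have hSne : S.Nonempty := hne.imp fun n hn => (hS n).2 hn
  have hk := (hS _).1 (S.min'_mem hSne)
  have hl := (hS _).1 (S.max'_mem hSne)
  refine ⟨S.min' hSne, S.max' hSne, (hsupp _ hk).1, S.min'_le _ (S.max'_mem hSne), (hsupp _ hl).2,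
    fun n => ⟨fun hn => ⟨S.min'_le n ((hS n).2 hn), S.le_max' n ((hS n).2 hn)⟩,
      fun hn => hf _ n _ hn.1 hn.2 hk hl⟩⟩

lemma exists_eq_mul_zpow_of_mul_eq_sq {g : ℤ → ℝ} {k l : ℤ}
    (hpos : ∀ n, k ≤ n → n ≤ l → 0 < g n)
    (hsq : ∀ n, k < n → n < l → g (n - 1) * g (n + 1) = g n ^ 2) :
    ∃ ρ > 0, ∀ n, k ≤ n → n ≤ l → g n = g k * ρ ^ (n - k) := by
  obtain ⟨ρ, hρ, hstep⟩ : ∃ ρ > 0, ∀ n, k ≤ n → n < l → g (n + 1) = ρ * g n := by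
    rcases lt_or_ge k l with hkl | hlk
    · have hgk := hpos k le_rfl hkl.le
      refine ⟨g (k + 1) / g k, div_pos (hpos _ (by omega) (by omega)) hgk, ?_⟩
      refine Int.leInduction (fun _ => by field_simp) fun n hkn ih hnl => ?_
      have hgn := hpos n hkn (by omega)
      have h₁ := ih (by omega)
      have h₂ := hsq (n + 1) (by omega) hnl
      rw [add_sub_cancel_right, h₁] at h₂
      rw [h₁]
      apply mul_left_cancel₀ hgn.ne'
      linear_combination h₂
    · exact ⟨1, one_pos, fun n hkn hnl => by omega⟩
  refine ⟨ρ, hρ, Int.leInduction (fun _ => by simp) fun n hkn ih hnl => ?_⟩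
  rw [hstep n hkn (by omega), ih (by omega), add_sub_right_comm, zpow_add_one₀ hρ.ne']
  ring

lemma mul_mul_mul_le_sq_of_add_eq {a b c x y z : ℝ} (hac : 0 ≤ a * c) (hlc : a * c ≤ b ^ 2)
    (hxz : x + z = 2 * y) : a * x * (c * z) ≤ (b * y) ^ 2 := by
  have hxyz : x * z ≤ y ^ 2 := by
    rw [show y = (x + z) / 2 by linarith]
    nlinarith [sq_nonneg (x - z)]
  calc a * x * (c * z) = a * c * (x * z) := by ring
    _ ≤ a * c * y ^ 2 := mul_le_mul_of_nonneg_left hxyz hac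
    _ ≤ b ^ 2 * y ^ 2 := mul_le_mul_of_nonneg_right hlc (sq_nonneg y)
    _ = (b * y) ^ 2 := by ring

namespace LCPmfSet

variable {q : ℤ → ℝ} {M N : ℤ} {h p : ℤ → ℝ}

lemma div_nonneg (hqpos : ∀ n ∈ Icc M N, 0 < q n) (hp : p ∈ LCPmfSet q M N h) (n : ℤ) :
    0 ≤ p n / q n := by
  by_cases hn : n ∈ Icc M N
  · exact _root_.div_nonneg (hp.1 n) (hqpos n hn).le
  · simp [hp.2.1 n hn]

lemma eventually_mul_one_add_mul_mem (hqpos : ∀ n ∈ Icc M N, 0 < q n)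
    (hp : p ∈ LCPmfSet q M N h) {V : ℤ → ℝ} {m : ℤ}
    (hstrict : p (m - 1) / q (m - 1) * (p (m + 1) / q (m + 1)) < (p m / q m) ^ 2)
    (hV : ∀ n ≠ m, V (n - 1) + V (n + 1) = 2 * V n)
    (hmass : ∑ n ∈ Icc M N, p n * V n = 0) (hmoment : ∑ n ∈ Icc M N, h n * p n * V n = 0) :
    ∀ᶠ s in 𝓝 (0 : ℝ), (fun n => p n * (1 + s * V n)) ∈ LCPmfSet q M N h := by
  have hg0 := div_nonneg hqpos hp
  obtain ⟨hp0, hpz, hpsum, ⟨hlc, hcontig⟩, hEh⟩ := hp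
  have hpos : ∀ᶠ s in 𝓝 (0 : ℝ), ∀ n ∈ Icc M N, 0 < 1 + s * V n :=
    (eventually_all_finset _).2 fun n _ =>
      continuousAt_const.eventually_lt (by fun_prop) (by simp)
  have hlcm : ∀ᶠ s in 𝓝 (0 : ℝ), p (m - 1) / q (m - 1) * (1 + s * V (m - 1)) *
      (p (m + 1) / q (m + 1) * (1 + s * V (m + 1))) < (p m / q m * (1 + s * V m)) ^ 2 :=
    ContinuousAt.eventually_lt (by fun_prop) (by fun_prop) (by simpa using hstrict)
  have hdiv : ∀ s n, p n * (1 + s * V n) / q n = p n / q n * (1 + s * V n) :=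
    fun _ _ => mul_div_right_comm _ _ _
  filter_upwards [hpos, hlcm] with s hs hsm
  have hpos_iff : ∀ n, 0 < p n * (1 + s * V n) / q n ↔ 0 < p n / q n := fun n => by
    by_cases hn : n ∈ Icc M N
    · rw [hdiv, mul_pos_iff_of_pos_right (hs n hn)]
    · simp [hpz n hn]
  refine ⟨fun n => ?_, fun n hn => by simp [hpz n hn], ?_, ⟨fun n => ?_, ?_⟩, ?_⟩
  · by_cases hn : n ∈ Icc M N
    · exact mul_nonneg (hp0 n) (hs n hn).le
    · simp [hpz n hn]
  · simp only [mul_one_add, sum_add_distrib, mul_left_comm _ s, ← mul_sum, hmass, hpsum]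
    ring
  · simp only [hdiv]
    rcases eq_or_ne n m with rfl | hnm
    · exact hsm.le
    · exact mul_mul_mul_le_sq_of_add_eq (mul_nonneg (hg0 _) (hg0 _)) (hlc n)
        (by linear_combination s * hV n hnm)
  · intro a b c hab hbc ha hc
    rw [hpos_iff] at ha hc ⊢
    exact hcontig a b c hab hbc ha hc
  · have hexpand : ∀ n, h n * (p n * (1 + s * V n)) = h n * p n + s * (h n * p n * V n) :=
      fun n => by ring
    simpa only [hexpand, sum_add_distrib, ← mul_sum, hmoment, mul_zero, add_zero] using hEh

lemma exists_pos_iff_mem_Icc (hqpos : ∀ n ∈ Icc M N, 0 < q n) (hp : p ∈ LCPmfSet q M N h) :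
    ∃ k l, M ≤ k ∧ k ≤ l ∧ l ≤ N ∧ ∀ n, 0 < p n / q n ↔ n ∈ Set.Icc k l := by
  obtain ⟨hp0, hpz, hpsum, ⟨-, hcontig⟩, -⟩ := hp
  refine hcontig.exists_pos_iff_mem_Icc (fun n hn => ?_) ?_
  · by_contra hn'
    simp [hpz n (by simpa using hn')] at hn
  · obtain ⟨n, hn, hpn⟩ := exists_ne_zero_of_sum_ne_zero (hpsum.trans_ne one_ne_zero)
    exact ⟨n, _root_.div_pos ((hp0 n).lt_of_ne' hpn) (hqpos n hn)⟩

lemma mul_eq_sq_of_mem_extremePoints (hqpos : ∀ n ∈ Icc M N, 0 < q n)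
    (hp : p ∈ (convexHull ℝ (LCPmfSet q M N h)).extremePoints ℝ) {m : ℤ}
    (hpred : 0 < p (m - 1) / q (m - 1)) (hm : 0 < p m / q m) (hsucc : 0 < p (m + 1) / q (m + 1)) :
    p (m - 1) / q (m - 1) * (p (m + 1) / q (m + 1)) = (p m / q m) ^ 2 := by
  have hpS : p ∈ LCPmfSet q M N h := extremePoints_convexHull_subset hp
  refine (hpS.2.2.2.1.1 m).eq_of_not_lt fun hstrict => ?_
  set κ : ℤ → ℝ := fun n => ((max (n - m) 0 : ℤ) : ℝ)
  obtain ⟨c, hc, hcV⟩ :=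
    exists_ne_zero_sum_mul_sum_eq_zero (Icc M N) ![p, h * p] ![fun _ => 1, fun n => n, κ] (by simp)
  set V : ℤ → ℝ := fun n => c 0 + c 1 * n + c 2 * κ n
  have hmass : ∑ n ∈ Icc M N, p n * V n = 0 := by
    simpa [Fin.sum_univ_three, V, mul_comm] using hcV 0
  have hmoment : ∑ n ∈ Icc M N, h n * p n * V n = 0 := by
    simpa [Fin.sum_univ_three, V, mul_comm] using hcV 1
  have hkink : ∀ n ≠ m, V (n - 1) + V (n + 1) = 2 * V n := by
    intro n hn
    have hκn : κ (n - 1) + κ (n + 1) = 2 * κ n := by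
      simp only [κ]
      exact_mod_cast (by omega : max (n - 1 - m) 0 + max (n + 1 - m) 0 = 2 * max (n - m) 0)
    simp only [V]
    push_cast
    linear_combination c 2 * hκn
  have hVne : ∃ n, 0 < p n / q n ∧ V n ≠ 0 := by
    by_contra! hV0
    have e₁ := hV0 _ hpred
    have e₂ := hV0 _ hm
    have e₃ := hV0 _ hsucc
    simp only [V, κ, sub_sub_cancel_left, sub_self, add_sub_cancel_left] at e₁ e₂ e₃
    norm_num at e₁ e₂ e₃
    have hc₁ : c 1 = 0 := by linear_combination e₂ - e₁
    have hc₀ : c 0 = 0 := by linear_combination e₂ - (m : ℝ) * hc₁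
    have hc₂ : c 2 = 0 := by linear_combination e₃ - e₂ - hc₁
    exact hc (funext fun i => by fin_cases i <;> assumption)
  have hpV : (fun n => p n * V n) = 0 := by
    refine eq_zero_of_mem_extremePoints_of_eventually_add_smul_mem hp
      ((eventually_mul_one_add_mul_mem hqpos hpS hstrict hkink hmass hmoment).mono
        fun s hs => subset_convexHull ℝ _ ?_)
    convert hs using 1
    funext n
    simp only [Pi.add_apply, Pi.smul_apply, smul_eq_mul]
    ring
  obtain ⟨n, hgn, hVn⟩ := hVne
  have hpn : p n ≠ 0 := (div_ne_zero_iff.1 hgn.ne').1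
  exact mul_ne_zero hpn hVn (congrFun hpV n)

end LCPmfSet

theorem extremePoint_isLogAffine_general (M N : ℤ) (q : ℤ → ℝ)
    (hqpos : ∀ n ∈ Finset.Icc M N, 0 < q n)
    (h : ℤ → ℝ) (p : ℤ → ℝ)
    (hp : p ∈ (convexHull ℝ (LCPmfSet q M N h)).extremePoints ℝ) :
    ∃ C : ℝ, 0 < C ∧ ∃ ρ : ℝ, 0 < ρ ∧ ∃ k l : ℤ, M ≤ k ∧ k ≤ l ∧ l ≤ N ∧
      ∀ n : ℤ, p n / q n = if k ≤ n ∧ n ≤ l then C * ρ ^ n else 0 := by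
  have hpS : p ∈ LCPmfSet q M N h := extremePoints_convexHull_subset hp
  obtain ⟨k, l, hMk, hkl, hlN, hpos⟩ := LCPmfSet.exists_pos_iff_mem_Icc hqpos hpS
  obtain ⟨ρ, hρ, hgeo⟩ := exists_eq_mul_zpow_of_mul_eq_sq (fun n hkn hnl => (hpos n).2 ⟨hkn, hnl⟩)
    fun n hkn hnl => LCPmfSet.mul_eq_sq_of_mem_extremePoints hqpos hp
      ((hpos _).2 ⟨by omega, by omega⟩) ((hpos _).2 ⟨hkn.le, hnl.le⟩)
      ((hpos _).2 ⟨by omega, by omega⟩)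
  have hgk : 0 < p k / q k := (hpos k).2 ⟨le_rfl, hkl⟩
  refine ⟨p k / q k * ρ ^ (-k), mul_pos hgk (zpow_pos hρ _), ρ, hρ, k, l, hMk, hkl, hlN,
    fun n => ?_⟩
  split_ifs with hn
  · rw [hgeo n hn.1 hn.2, mul_assoc, ← zpow_add₀ hρ.ne', neg_add_eq_sub]
  · exact le_antisymm (not_lt.1 (mt (hpos n).1 hn)) (LCPmfSet.div_nonneg hqpos hpS n)

/-- Any extreme point of the convex hull of `𝒫ₕᵞ(⟦M,N⟧)` has a p.m.f. with respect to `γ`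
of the log-affine form `f(n) = C·ρⁿ·1_{⟦k,l⟧}(n)`. -/
theorem extremePoint_isLogAffine (M N : ℤ) (hMN : M ≤ N)
    (q : ℤ → ℝ) (hq0 : ∀ n, 0 ≤ q n) (hqc : ContigSupportInt q)
    (hqpos : ∀ n ∈ Finset.Icc M N, 0 < q n)
    (h : ℤ → ℝ) (p : ℤ → ℝ)
    (hp : p ∈ (convexHull ℝ (LCPmfSet q M N h)).extremePoints ℝ) :
    ∃ C : ℝ, 0 < C ∧ ∃ ρ : ℝ, 0 < ρ ∧ ∃ k l : ℤ, M ≤ k ∧ k ≤ l ∧ l ≤ N ∧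
      ∀ n : ℤ, p n / q n = if k ≤ n ∧ n ≤ l then C * ρ ^ n else 0 :=
  extremePoint_isLogAffine_general M N q hqpos h p hp
end

section
/- If f and g are log-concave nonnegative summable sequences on ℤ (i.e., f(n)² ≥ f(n-1)·f(n+1) for all n, with contiguous support, and similarly for g), then their convolution f*g, defined by (f*g)(n) = Σ_k f(n−k)·g(k), is log-concave. -/
/-- `f : ℤ → [0,∞)` is log-concave: nonnegative, `f(n)² ≥ f(n-1)·f(n+1)` for all `n`,
and its support is contiguous. -/
def IsLogConcaveInt (f : ℤ → ℝ) : Prop :=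
  (∀ n, 0 ≤ f n) ∧ (∀ n : ℤ, f (n - 1) * f (n + 1) ≤ f n ^ 2) ∧ ContigSupportInt f

/-- The convolution `(f*g)(n) = Σ_k f(n−k)·g(k)`. -/
noncomputable def convInt (f g : ℤ → ℝ) (n : ℤ) : ℝ :=
  ∑' k : ℤ, f (n - k) * g k

/-!
The terms of `(f*g)(n)^2 - (f*g)(n-1)(f*g)(n+1)`, written as a double series and symmetrized,
become products `(a j b k - a k b j)(c j d k - c k d j)` with `a = f(n - ·)`, `b = f(n - 1 - ·)`,
`c = g`, `d = g(· + 1)`. Log-concavity says exactly that both ratios `a/b` and `c/d` are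
monotone, so both factors have the same sign. The support of `f*g` is the sumset of the
supports of `f` and `g`, a sum of two intervals, hence again an interval.
-/

open Set Function

section RatioMonotone

variable {ι : Type*} [LinearOrder ι] {a b c d : ι → ℝ}

theorem tsum_mul_tsum_le_tsum_mul_tsum_of_monotone_ratio
    (ha : 0 ≤ a) (hb : 0 ≤ b) (hc : 0 ≤ c) (hd : 0 ≤ d)
    (hac : Summable fun k => a k * c k) (hbd : Summable fun k => b k * d k)
    (had : Summable fun k => a k * d k) (hbc : Summable fun k => b k * c k)
    (hab : ∀ j k, j ≤ k → a j * b k ≤ a k * b j) (hcd : ∀ j k, j ≤ k → c j * d k ≤ c k * d j) :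
    (∑' k, a k * d k) * (∑' k, b k * c k) ≤ (∑' k, a k * c k) * (∑' k, b k * d k) := by
  have hP := hac.mul_of_nonneg hbd (fun k => mul_nonneg (ha k) (hc k))
    (fun k => mul_nonneg (hb k) (hd k))
  have hQ := had.mul_of_nonneg hbc (fun k => mul_nonneg (ha k) (hd k))
    (fun k => mul_nonneg (hb k) (hc k))
  set T : ι × ι → ℝ := fun p => a p.1 * c p.1 * (b p.2 * d p.2) - a p.1 * d p.1 * (b p.2 * c p.2)
  have hT : Summable T := hP.sub hQ
  have hT_symm : 0 ≤ T + T ∘ Prod.swap := by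
    rintro ⟨j, k⟩
    have hfactor : T (j, k) + T (k, j) = (a j * b k - a k * b j) * (c j * d k - c k * d j) := by
      simp only [T]; ring
    simp only [Pi.add_apply, comp_apply, Prod.swap_prod_mk, Pi.zero_apply, hfactor]
    rcases le_total j k with hjk | hkj
    · exact mul_nonneg_of_nonpos_of_nonpos (by linarith [hab j k hjk]) (by linarith [hcd j k hjk])
    · exact mul_nonneg (by linarith [hab k j hkj]) (by linarith [hcd k j hkj])
  have hsum_T : 0 ≤ 2 * ∑' p, T p := by
    calc 0 ≤ ∑' p : ι × ι, (T p + T p.swap) := tsum_nonneg hT_symm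
      _ = ∑' p, T p + ∑' p : ι × ι, T p.swap := hT.tsum_add hT.prod_symm
      _ = 2 * ∑' p, T p := by
        rw [show ∑' p : ι × ι, T p.swap = ∑' p, T p from (Equiv.prodComm ι ι).tsum_eq T]; ring
  rw [hac.tsum_mul_tsum hbd hP, had.tsum_mul_tsum hbc hQ]
  have : ∑' p, T p = ∑' p : ι × ι, a p.1 * c p.1 * (b p.2 * d p.2) -
      ∑' p : ι × ι, a p.1 * d p.1 * (b p.2 * c p.2) := hP.tsum_sub hQ
  linarith

end RatioMonotone

section LogConcave

variable {f : ℤ → ℝ}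

theorem ContigSupportInt.pos_of_mem_uIcc (hf : ContigSupportInt f) {x y z : ℤ}
    (hx : 0 < f x) (hy : 0 < f y) (hz : z ∈ uIcc x y) : 0 < f z := by
  rcases mem_uIcc.1 hz with ⟨hxz, hzy⟩ | ⟨hyz, hzx⟩
  · exact hf x z y hxz hzy hx hy
  · exact hf y z x hyz hzx hy hx

theorem IsLogConcaveInt.mul_add_one_le (hf : IsLogConcaveInt f) {j k : ℤ} (hjk : j ≤ k) :
    f j * f (k + 1) ≤ f k * f (j + 1) := by
  obtain ⟨hf0, hlc, hc⟩ := hf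
  induction k, hjk using Int.leInduction with
  | base => rfl
  | succ k hjk ih =>
    rcases (mul_nonneg (hf0 j) (hf0 (k + 1 + 1))).eq_or_lt with h0 | hpos
    · rw [← h0]; exact mul_nonneg (hf0 _) (hf0 _)
    have hk1 : 0 < f (k + 1) := hc j (k + 1) (k + 1 + 1) (by omega) (by omega)
      (pos_of_mul_pos_left hpos (hf0 _)) (pos_of_mul_pos_right hpos (hf0 _))
    have hlc_succ := hlc (k + 1)
    rw [add_sub_cancel_right] at hlc_succ
    refine le_of_mul_le_mul_right ?_ hk1
    calc f j * f (k + 1 + 1) * f (k + 1) = f j * f (k + 1) * f (k + 1 + 1) := by ring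
      _ ≤ f k * f (j + 1) * f (k + 1 + 1) := mul_le_mul_of_nonneg_right ih (hf0 _)
      _ = f (j + 1) * (f k * f (k + 1 + 1)) := by ring
      _ ≤ f (j + 1) * f (k + 1) ^ 2 := mul_le_mul_of_nonneg_left hlc_succ (hf0 _)
      _ = f (k + 1) * f (j + 1) * f (k + 1) := by ring

end LogConcave

section Convolution

variable {f g : ℤ → ℝ}

theorem summable_mul_comp_of_injective (hf0 : 0 ≤ f) (hg0 : 0 ≤ g) (hfs : Summable f)
    (hgs : Summable g) (φ : ℤ → ℤ) {ψ : ℤ → ℤ} (hψ : Injective ψ) :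
    Summable fun k => f (φ k) * g (ψ k) :=
  (hfs.mul_of_nonneg hgs hf0 hg0).comp_injective (i := fun k => (φ k, ψ k))
    fun _ _ h => hψ (congrArg Prod.snd h)

theorem convInt_nonneg (hf0 : 0 ≤ f) (hg0 : 0 ≤ g) (n : ℤ) : 0 ≤ convInt f g n :=
  tsum_nonneg fun _ => mul_nonneg (hf0 _) (hg0 _)

theorem convInt_add_one (f g : ℤ → ℝ) (n : ℤ) :
    convInt f g (n + 1) = ∑' k, f (n - k) * g (k + 1) := by
  rw [convInt, ← (Equiv.addRight (1 : ℤ)).tsum_eq]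
  simp only [Equiv.coe_addRight, add_sub_add_right_eq_sub]

theorem convInt_pos_iff (hf0 : 0 ≤ f) (hg0 : 0 ≤ g) (hfs : Summable f) (hgs : Summable g)
    (n : ℤ) : 0 < convInt f g n ↔ ∃ k, 0 < f (n - k) ∧ 0 < g k := by
  constructor
  · intro hpos
    by_contra! hzero
    have hterm (k : ℤ) : f (n - k) * g k = 0 := by
      rcases (hf0 (n - k)).lt_or_eq with h | h
      · exact mul_eq_zero_of_right _ ((hzero k h).antisymm (hg0 k))
      · exact mul_eq_zero_of_left h.symm _
    simp [convInt, hterm] at hpos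
  · rintro ⟨k, hfk, hgk⟩
    exact (summable_mul_comp_of_injective hf0 hg0 hfs hgs _ injective_id).tsum_pos
      (fun _ => mul_nonneg (hf0 _) (hg0 _)) k (mul_pos hfk hgk)

theorem contigSupportInt_convInt (hf0 : 0 ≤ f) (hg0 : 0 ≤ g) (hfc : ContigSupportInt f)
    (hgc : ContigSupportInt g) (hfs : Summable f) (hgs : Summable g) :
    ContigSupportInt (convInt f g) := by
  intro a b c hab hbc ha hc
  obtain ⟨k₁, hf₁, hg₁⟩ := (convInt_pos_iff hf0 hg0 hfs hgs a).1 ha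
  obtain ⟨k₂, hf₂, hg₂⟩ := (convInt_pos_iff hf0 hg0 hfs hgs c).1 hc
  -- `b` lies in the sum of the intervals spanned by the two pairs of witnesses.
  set k := max (min k₁ k₂) (b - max (a - k₁) (c - k₂))
  refine (convInt_pos_iff hf0 hg0 hfs hgs b).2 ⟨k, ?_, ?_⟩
  · exact hfc.pos_of_mem_uIcc hf₁ hf₂ (mem_uIcc.2 (by omega))
  · exact hgc.pos_of_mem_uIcc hg₁ hg₂ (mem_uIcc.2 (by omega))

theorem IsLogConcaveInt.convInt_sub_one_mul_convInt_add_one_le (hf : IsLogConcaveInt f)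
    (hg : IsLogConcaveInt g) (hfs : Summable f) (hgs : Summable g) (n : ℤ) :
    convInt f g (n - 1) * convInt f g (n + 1) ≤ convInt f g n ^ 2 := by
  have hsum (φ : ℤ → ℤ) {ψ : ℤ → ℤ} (hψ : Injective ψ) :=
    summable_mul_comp_of_injective hf.1 hg.1 hfs hgs φ hψ
  have hshift (i : ℤ) : n - 1 - i + 1 = n - i := by ring
  have key := tsum_mul_tsum_le_tsum_mul_tsum_of_monotone_ratio
    (a := fun k => f (n - k)) (b := fun k => f (n - 1 - k)) (c := g) (d := fun k => g (k + 1))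
    (fun _ => hf.1 _) (fun _ => hf.1 _) hg.1 (fun _ => hg.1 _)
    (hsum _ injective_id) (hsum _ (add_left_injective 1))
    (hsum _ (add_left_injective 1)) (hsum _ injective_id)
    (fun j k hjk => by
      have := hf.mul_add_one_le (show n - 1 - k ≤ n - 1 - j by omega)
      rw [hshift, hshift] at this
      linarith)
    (fun _ _ => hg.mul_add_one_le)
  rwa [← convInt_add_one, ← convInt, ← convInt, ← convInt_add_one, sub_add_cancel, mul_comm,
    ← sq] at key

end Convolution

/-- The convolution of two log-concave nonnegative summable sequences on `ℤ` is
log-concave. -/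
theorem isLogConcaveInt_conv (f g : ℤ → ℝ)
    (hf : IsLogConcaveInt f) (hg : IsLogConcaveInt g)
    (hfs : Summable f) (hgs : Summable g) :
    IsLogConcaveInt (convInt f g) :=
  ⟨convInt_nonneg hf.1 hg.1, hf.convInt_sub_one_mul_convInt_add_one_le hg hfs hgs,
    contigSupportInt_convInt hf.1 hg.1 hf.2.2 hg.2.2 hfs hgs⟩
end

section
/- (Discrete localization for two functions) Let M ≤ N be integers, γ a measure on ℤ with mass function q positive on a contiguous support containing ⟦M,N⟧, and f, g : ⟦M,N⟧ → ℝ. Then the pair of inequalities Σᵢ f(i)·μ(i) ≥ 0 and Σᵢ g(i)·μ(i) ≥ 0 holds for every probability mass function μ supported on ⟦M,N⟧ that is log-concave with respect to γ if and only if the pair Σᵢ f(i)·ν(i) ≥ 0 and Σᵢ g(i)·ν(i) ≥ 0 holds for every probability mass function ν supported on ⟦M,N⟧ that is log-affine with respect to γ. -/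
/-- `p` is a probability mass function supported on `⟦M,N⟧`. -/
def IsPMFOn (M N : ℤ) (p : ℤ → ℝ) : Prop :=
  (∀ n, 0 ≤ p n) ∧ (∀ n : ℤ, n ∉ Finset.Icc M N → p n = 0) ∧
    (∑ n ∈ Finset.Icc M N, p n) = 1

/-- `p` is log-affine with respect to the reference mass function `q`: the ratio `p/q`
satisfies the log-affine equation on (the interior of) its contiguous support. -/
def IsLogAffineWrt (q p : ℤ → ℝ) : Prop :=
  (∀ n : ℤ, 0 < p (n - 1) / q (n - 1) → 0 < p (n + 1) / q (n + 1) →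
      (p (n - 1) / q (n - 1)) * (p (n + 1) / q (n + 1)) = (p n / q n) ^ 2) ∧
    ContigSupportInt (fun n => p n / q n)

open Finset

theorem Int.sum_Icc_sub_sub_one (v : ℤ → ℝ) {M n : ℤ} (h : M - 1 ≤ n) :
    ∑ c ∈ Icc M n, (v c - v (c - 1)) = v n - v (M - 1) := by
  induction n, h using Int.leInduction with
  | base => simp
  | succ n hn ih =>
    rw [← Order.succ_eq_add_one, ← insert_Icc_right_eq_Icc_succ (by simp; omega),
      sum_insert (by simp), ih]
    simp

theorem mul_le_mul_succ_pred_of_log_concave {u : ℤ → ℝ}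
    (hlc : ∀ n, u (n - 1) * u (n + 1) ≤ u n ^ 2) {m n : ℤ} (hmn : m < n)
    (hpos : ∀ k ∈ Icc m n, 0 < u k) : u m * u n ≤ u (m + 1) * u (n - 1) := by
  induction n, (show m + 1 ≤ n by omega) using Int.leInduction with
  | base => simp [mul_comm]
  | succ n hn ih =>
    have hpos' : ∀ k ∈ Icc m n, 0 < u k := fun k hk => hpos k (by simp at hk ⊢; omega)
    have ih := ih (by omega) hpos'
    have hm := (hpos' m (by simp; omega)).le
    have hn0 := (hpos' n (by simp; omega)).le
    have hn1 : 0 < u (n - 1) := hpos' _ (by simp; omega)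
    rw [add_sub_cancel_right]
    refine le_of_mul_le_mul_left ?_ hn1
    calc u (n - 1) * (u m * u (n + 1)) = u m * (u (n - 1) * u (n + 1)) := by ring
      _ ≤ u m * u n ^ 2 := mul_le_mul_of_nonneg_left (hlc n) hm
      _ = u n * (u m * u n) := by ring
      _ ≤ u n * (u (m + 1) * u (n - 1)) := mul_le_mul_of_nonneg_left ih hn0
      _ = u (n - 1) * (u (m + 1) * u n) := by ring

-- If `b - 1` lies outside the support, any positive ratio serves.
noncomputable def lastRatio (u : ℤ → ℝ) (b : ℤ) : ℝ :=
  if 0 < u (b - 1) then u b / u (b - 1) else 1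

section lastRatio

variable {u : ℤ → ℝ} {b : ℤ}

theorem lastRatio_pos (hub : 0 < u b) : 0 < lastRatio u b := by
  unfold lastRatio
  split_ifs with h <;> positivity

theorem lastRatio_mul_le (hu0 : ∀ n, 0 ≤ u n) (hlc : ∀ n, u (n - 1) * u (n + 1) ≤ u n ^ 2)
    (hcontig : ContigSupportInt u) (hub : 0 < u b) {c : ℤ} (hc : c ≤ b) :
    lastRatio u b * u (c - 1) ≤ u c := by
  rcases (hu0 (c - 1)).eq_or_lt with h | h
  · rw [← h, mul_zero]
    exact hu0 c
  have hpos : ∀ k ∈ Icc (c - 1) b, 0 < u k := fun k hk => by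
    rw [mem_Icc] at hk
    exact hcontig _ k _ hk.1 hk.2 h hub
  have hb1 : 0 < u (b - 1) := hpos _ (by simp; omega)
  have key := mul_le_mul_succ_pred_of_log_concave hlc (by omega) hpos
  rw [sub_add_cancel] at key
  simp only [lastRatio, if_pos hb1, div_mul_eq_mul_div, div_le_iff₀ hb1]
  linarith

end lastRatio

theorem IsLogAffineWrt.isLogConcaveWrt {q p : ℤ → ℝ} (hq0 : ∀ n, 0 ≤ q n) (hp0 : ∀ n, 0 ≤ p n)
    (hp : IsLogAffineWrt q p) : IsLogConcaveWrt q p := by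
  obtain ⟨heq, hcontig⟩ := hp
  refine ⟨fun n => ?_, hcontig⟩
  have hu0 : ∀ m, 0 ≤ p m / q m := fun m => div_nonneg (hp0 m) (hq0 m)
  rcases (hu0 (n - 1)).eq_or_lt with h₁ | h₁
  · rw [← h₁, zero_mul]; positivity
  rcases (hu0 (n + 1)).eq_or_lt with h₂ | h₂
  · rw [← h₂, mul_zero]; positivity
  exact (heq n h₁ h₂).le

theorem IsLogAffineWrt.const_mul {q p : ℤ → ℝ} (hp : IsLogAffineWrt q p) {s : ℝ} (hs : 0 < s) :
    IsLogAffineWrt q (fun n => s * p n) := by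
  have hdiv : ∀ n, s * p n / q n = s * (p n / q n) := fun n => mul_div_assoc _ _ _
  obtain ⟨heq, hcontig⟩ := hp
  refine ⟨fun n h₁ h₂ => ?_, fun x y z hxy hyz hx hz => ?_⟩
  · simp only [hdiv, mul_pos_iff_of_pos_left hs] at h₁ h₂ ⊢
    linear_combination s ^ 2 * heq n h₁ h₂
  · simp only [hdiv, mul_pos_iff_of_pos_left hs] at hx hz ⊢
    exact hcontig x y z hxy hyz hx hz

theorem IsPMFOn.exists_max_pos {M N : ℤ} {p : ℤ → ℝ} (hp : IsPMFOn M N p) :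
    ∃ b ∈ Icc M N, 0 < p b ∧ ∀ n, b < n → p n = 0 := by
  obtain ⟨hp0, hout, hsum⟩ := hp
  have hS : ((Icc M N).filter (0 < p ·)).Nonempty := by
    obtain ⟨i, hi, hpi⟩ := exists_lt_of_sum_lt (s := Icc M N) (f := 0) (g := p) (by simp [hsum])
    exact ⟨i, mem_filter.2 ⟨hi, hpi⟩⟩
  obtain ⟨hbI, hb⟩ := mem_filter.1 (max'_mem _ hS)
  refine ⟨_, hbI, hb, fun n hn => ?_⟩
  by_cases hnI : n ∈ Icc M N
  · refine le_antisymm (not_lt.1 fun hpn => ?_) (hp0 n)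
    exact hn.not_ge (le_max' _ n (mem_filter.2 ⟨hnI, hpn⟩))
  · exact hout n hnI

theorem sum_mul_nonneg_of_isLogAffineWrt {M N : ℤ} {q F : ℤ → ℝ}
    (hF : ∀ ν : ℤ → ℝ, IsPMFOn M N ν → IsLogAffineWrt q ν → 0 ≤ ∑ i ∈ Icc M N, F i * ν i)
    {p : ℤ → ℝ} (hp0 : ∀ n, 0 ≤ p n) (hout : ∀ n ∉ Icc M N, p n = 0)
    (hp : IsLogAffineWrt q p) : 0 ≤ ∑ i ∈ Icc M N, F i * p i := by
  set S := ∑ i ∈ Icc M N, p i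
  rcases (sum_nonneg fun i _ => hp0 i : 0 ≤ S).eq_or_lt with hS | hS
  · have hp_zero := (sum_eq_zero_iff_of_nonneg fun i _ => hp0 i).1 hS.symm
    rw [sum_eq_zero fun i hi => by rw [hp_zero i hi, mul_zero]]
  have hν : IsPMFOn M N (fun n => S⁻¹ * p n) :=
    ⟨fun n => mul_nonneg (inv_nonneg.2 hS.le) (hp0 n),
      fun n hn => by simp [hout n hn], by rw [← mul_sum, inv_mul_cancel₀ hS.ne']⟩
  have h := hF _ hν (hp.const_mul (inv_pos.2 hS))
  simp only [mul_left_comm (F _), ← mul_sum] at h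
  exact nonneg_of_mul_nonneg_right h (inv_pos.2 hS)

noncomputable def geomPiece (q : ℤ → ℝ) (r : ℝ) (c b n : ℤ) : ℝ :=
  if n ∈ Icc c b then q n * r ^ n else 0

section geomPiece

variable {q : ℤ → ℝ} {r : ℝ} {c b : ℤ}

theorem geomPiece_nonneg (hq : ∀ n ∈ Icc c b, 0 < q n) (hr : 0 < r) (n : ℤ) :
    0 ≤ geomPiece q r c b n := by
  unfold geomPiece
  split_ifs with hn
  · exact (mul_pos (hq n hn) (zpow_pos hr n)).le
  · exact le_rfl

theorem geomPiece_div (hq : ∀ n ∈ Icc c b, 0 < q n) (n : ℤ) :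
    geomPiece q r c b n / q n = if n ∈ Icc c b then r ^ n else 0 := by
  unfold geomPiece
  split_ifs with hn
  · exact mul_div_cancel_left₀ _ (hq n hn).ne'
  · exact zero_div _

theorem isLogAffineWrt_geomPiece (hq : ∀ n ∈ Icc c b, 0 < q n) (hr : 0 < r) :
    IsLogAffineWrt q (geomPiece q r c b) := by
  have hpos : ∀ n, 0 < geomPiece q r c b n / q n ↔ n ∈ Icc c b := by
    intro n
    rw [geomPiece_div hq]
    split_ifs with hn <;> simp [hn, zpow_pos hr]
  refine ⟨fun n h₁ h₂ => ?_, fun x y z hxy hyz hx hz => ?_⟩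
  · rw [hpos, mem_Icc] at h₁ h₂
    simp only [geomPiece_div hq, mem_Icc]
    rw [if_pos (by omega), if_pos (by omega), if_pos (by omega), ← zpow_add₀ hr.ne', sq,
      ← zpow_add₀ hr.ne']
    congr 1
    ring
  · rw [hpos, mem_Icc] at hx hz ⊢
    omega

end geomPiece

theorem eq_sum_sub_mul_geomPiece {M b : ℤ} {q μ : ℤ → ℝ} (hq : ∀ n ∈ Icc M b, 0 < q n)
    {r : ℝ} (hr : r ≠ 0) (hout : ∀ n ∉ Icc M b, μ n = 0) (n : ℤ) :
    let v := fun k => μ k / q k / r ^ k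
    μ n = ∑ c ∈ Icc M b, (v c - v (c - 1)) * geomPiece q r c b n := by
  intro v
  simp only [geomPiece, mul_ite, mul_zero, ← sum_filter]
  by_cases hn : n ∈ Icc M b
  · have hfilter : (Icc M b).filter (fun c => n ∈ Icc c b) = Icc M n := by
      ext c; simp only [mem_filter, mem_Icc] at hn ⊢; omega
    have hv : v (M - 1) = 0 := by simp [v, hout (M - 1) (by simp)]
    rw [hfilter, ← sum_mul, Int.sum_Icc_sub_sub_one v (by simp at hn; omega), hv, sub_zero]
    simp only [v]
    field_simp [(hq n hn).ne', zpow_ne_zero n hr]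
  · have hfilter : (Icc M b).filter (fun c => n ∈ Icc c b) = ∅ := by
      ext c; simp only [mem_filter, mem_Icc, notMem_empty, iff_false] at hn ⊢; omega
    rw [hfilter, sum_empty, hout n hn]

theorem IsLogConcaveWrt.sum_mul_nonneg {M N : ℤ} {q F μ : ℤ → ℝ}
    (hqpos : ∀ n ∈ Icc M N, 0 < q n)
    (hF : ∀ ν : ℤ → ℝ, IsPMFOn M N ν → IsLogAffineWrt q ν → 0 ≤ ∑ i ∈ Icc M N, F i * ν i)
    (hμ : IsPMFOn M N μ) (hlc : IsLogConcaveWrt q μ) : 0 ≤ ∑ i ∈ Icc M N, F i * μ i := by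
  obtain ⟨b, hbI, hb, hb_max⟩ := hμ.exists_max_pos
  rw [mem_Icc] at hbI
  have hqb : ∀ n ∈ Icc M b, 0 < q n := fun n hn => hqpos n (by simp at hn ⊢; omega)
  have hout : ∀ n ∉ Icc M b, μ n = 0 := fun n hn => by
    by_cases hnb : b < n
    · exact hb_max n hnb
    · exact hμ.2.1 n (by simp at hn ⊢; omega)
  set u := fun n => μ n / q n
  have hu0 : ∀ n, 0 ≤ u n := fun n => by
    by_cases hn : n ∈ Icc M b
    · exact div_nonneg (hμ.1 n) (hqb n hn).le
    · simp [u, hout n hn]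
  have hub : 0 < u b := div_pos hb (hqb b (by simp; omega))
  set r := lastRatio u b
  have hr : 0 < r := lastRatio_pos hub
  have hstep : ∀ c ≤ b, r * u (c - 1) ≤ u c :=
    fun c hc => lastRatio_mul_le hu0 hlc.1 hlc.2 hub hc
  rw [sum_congr rfl fun i _ => by rw [eq_sum_sub_mul_geomPiece hqb hr.ne' hout i]]
  simp only [mul_sum]
  rw [sum_comm]
  refine sum_nonneg fun c hc => ?_
  rw [mem_Icc] at hc
  have hcoeff : μ (c - 1) / q (c - 1) / r ^ (c - 1) ≤ μ c / q c / r ^ c := by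
    rw [zpow_sub_one₀ hr.ne', div_mul_eq_div_div, div_inv_eq_mul, div_mul_eq_mul_div,
      mul_comm]
    exact div_le_div_of_nonneg_right (hstep c hc.2) (zpow_pos hr c).le
  have hqc : ∀ n ∈ Icc c b, 0 < q n := fun n hn => hqb n (by simp at hn ⊢; omega)
  have hpiece := sum_mul_nonneg_of_isLogAffineWrt hF (geomPiece_nonneg hqc hr)
    (fun n hn => if_neg (by simp at hn ⊢; omega))
    (isLogAffineWrt_geomPiece hqc hr)
  simp only [mul_left_comm (F _), ← mul_sum]
  exact mul_nonneg (sub_nonneg.2 hcoeff) hpiece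

theorem localization_two_functions_general (M N : ℤ)
    (q : ℤ → ℝ) (hq0 : ∀ n, 0 ≤ q n)
    (hqpos : ∀ n ∈ Finset.Icc M N, 0 < q n)
    (f g : ℤ → ℝ) :
    (∀ μ : ℤ → ℝ, IsPMFOn M N μ → IsLogConcaveWrt q μ →
        0 ≤ ∑ i ∈ Finset.Icc M N, f i * μ i ∧ 0 ≤ ∑ i ∈ Finset.Icc M N, g i * μ i) ↔
      (∀ ν : ℤ → ℝ, IsPMFOn M N ν → IsLogAffineWrt q ν →
        0 ≤ ∑ i ∈ Finset.Icc M N, f i * ν i ∧ 0 ≤ ∑ i ∈ Finset.Icc M N, g i * ν i) := by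
  refine ⟨fun h ν hν hla => h ν hν (hla.isLogConcaveWrt hq0 hν.1), fun h μ hμ hlc => ⟨?_, ?_⟩⟩
  · exact hlc.sum_mul_nonneg hqpos (fun ν hν hla => (h ν hν hla).1) hμ
  · exact hlc.sum_mul_nonneg hqpos (fun ν hν hla => (h ν hν hla).2) hμ

/-- Discrete localization for two functions: the pair of inequalities
`Σ f(i)·μ(i) ≥ 0` and `Σ g(i)·μ(i) ≥ 0` holds for every log-concave p.m.f. `μ` on
`⟦M,N⟧` iff it holds for every log-affine p.m.f. `ν` on `⟦M,N⟧`. -/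
theorem localization_two_functions (M N : ℤ) (hMN : M ≤ N)
    (q : ℤ → ℝ) (hq0 : ∀ n, 0 ≤ q n) (hqc : ContigSupportInt q)
    (hqpos : ∀ n ∈ Finset.Icc M N, 0 < q n)
    (f g : ℤ → ℝ) :
    (∀ μ : ℤ → ℝ, IsPMFOn M N μ → IsLogConcaveWrt q μ →
        0 ≤ ∑ i ∈ Finset.Icc M N, f i * μ i ∧ 0 ≤ ∑ i ∈ Finset.Icc M N, g i * μ i) ↔
      (∀ ν : ℤ → ℝ, IsPMFOn M N ν → IsLogAffineWrt q ν →
        0 ≤ ∑ i ∈ Finset.Icc M N, f i * ν i ∧ 0 ≤ ∑ i ∈ Finset.Icc M N, g i * ν i) :=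
  localization_two_functions_general M N q hq0 hqpos f g
end

section
/- Let X be a discrete log-concave random variable supported on the positive integers ℕ \ {0}, with median Med(X). Then for all t > 1, P(X > Med(X)·t) ≤ exp(−t·(log 2)/2), and for all ε ∈ (0,1), P(X ≤ Med(X)·ε) ≤ 2·(log 2)·ε. -/
/-- `p` is the p.m.f. of a log-concave probability measure on `ℤ`. -/
def IsLogConcavePMF (p : ℤ → ℝ) : Prop :=
  (∀ n, 0 ≤ p n) ∧ Summable p ∧ (∑' n : ℤ, p n) = 1 ∧
    (∀ n : ℤ, p (n - 1) * p (n + 1) ≤ p n ^ 2) ∧ ContigSupportInt p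

/-- `S ⊆ ℤ` is an interval. -/
def IsIntervalZ (S : Set ℤ) : Prop :=
  ∀ a b c : ℤ, a ≤ b → b ≤ c → a ∈ S → c ∈ S → b ∈ S

/-- The measure of a set `S ⊆ ℤ` under the p.m.f. `p`. -/
noncomputable def measOf (p : ℤ → ℝ) (S : Set ℤ) : ℝ :=
  ∑' n : ℤ, S.indicator p n

/-
Let `u k = P(X > k)`. Tails of a log-concave p.m.f. are log-concave and `u 0 = 1`, so the
sequence `u k ^ (1 / k)` is nonincreasing: `u n ^ k ≤ u k ^ n` for `k ≤ n`. Comparing the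
index `⌊m t⌋` (resp. `⌊m ε⌋`) with an index near the median, where `u` is at most (resp. at
least) `1 / 2`, gives `u ⌊m t⌋ ≤ 2 ^ (-t / 2)` and
`u ⌊m ε⌋ ≥ 2 ^ (-2 ε) ≥ 1 - 2 ε log 2`.
-/

open Set Real

lemma outer_mul_le_inner_mul {p : ℤ → ℝ} (h0 : ∀ n, 0 ≤ p n)
    (hlc : ∀ n : ℤ, p (n - 1) * p (n + 1) ≤ p n ^ 2) (hcs : ContigSupportInt p)
    {a b : ℤ} (hab : a ≤ b) : p (a - 1) * p (b + 1) ≤ p a * p b := by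
  induction b, hab using Int.leInduction with
  | base => simpa [sq] using hlc a
  | succ b hab ih =>
    rcases (h0 (b + 1)).eq_or_lt with hzero | hpos
    · have : p (a - 1) * p (b + 1 + 1) = 0 := by
        by_contra hne
        have := hcs (a - 1) (b + 1) (b + 1 + 1) (by omega) (by omega)
          (lt_of_le_of_ne (h0 _) (left_ne_zero_of_mul hne).symm)
          (lt_of_le_of_ne (h0 _) (right_ne_zero_of_mul hne).symm)
        exact this.ne' hzero.symm
      rw [this]
      exact mul_nonneg (h0 _) (h0 _)
    · refine le_of_mul_le_mul_right ?_ hpos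
      have hb := hlc (b + 1)
      rw [add_sub_cancel_right] at hb
      calc p (a - 1) * p (b + 1 + 1) * p (b + 1)
          = p (a - 1) * p (b + 1) * p (b + 1 + 1) := by ring
        _ ≤ p a * p b * p (b + 1 + 1) := mul_le_mul_of_nonneg_right ih (h0 _)
        _ = p a * (p b * p (b + 1 + 1)) := by ring
        _ ≤ p a * p (b + 1) ^ 2 := mul_le_mul_of_nonneg_left hb (h0 _)
        _ = p a * p (b + 1) * p (b + 1) := by ring

section Measure

variable {p : ℤ → ℝ}

lemma measOf_nonneg (h0 : ∀ n, 0 ≤ p n) (S : Set ℤ) : 0 ≤ measOf p S :=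
  tsum_nonneg fun n => indicator_nonneg (fun a _ => h0 a) n

lemma measOf_mono (h0 : ∀ n, 0 ≤ p n) (hsum : Summable p) {S T : Set ℤ} (hST : S ⊆ T) :
    measOf p S ≤ measOf p T :=
  (hsum.indicator S).tsum_le_tsum (fun n => indicator_le_indicator_of_subset hST h0 n)
    (hsum.indicator T)

lemma measOf_eq_zero {S : Set ℤ} (hS : ∀ n ∈ S, p n = 0) : measOf p S = 0 := by
  simp only [measOf, indicator_apply_eq_zero.mpr (hS _), tsum_zero]

lemma measOf_Iic_eq_one_sub (hsum : Summable p) (htot : ∑' n, p n = 1) (k : ℤ) :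
    measOf p (Iic k) = 1 - measOf p (Ioi k) := by
  refine eq_sub_of_add_eq ?_
  rw [measOf, measOf, ← (hsum.indicator _).tsum_add (hsum.indicator _), ← compl_Iic, ← htot]
  simp only [indicator_self_add_compl_apply]

lemma measOf_Ioi_eq_tsum (k : ℤ) : measOf p (Ioi k) = ∑' d : ℕ, p (k + 1 + d) := by
  have hinj : Function.Injective fun d : ℕ => k + 1 + d :=
    (add_right_injective _).comp Nat.cast_injective
  rw [measOf, ← hinj.tsum_eq]
  · exact tsum_congr fun d => indicator_of_mem (by simp only [mem_Ioi]; omega) p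
  · intro n hn
    have hkn : k < n := by by_contra h; exact hn (indicator_of_notMem h p)
    exact ⟨(n - (k + 1)).toNat, by simp only; omega⟩

lemma Summable.comp_add_natCast (hsum : Summable p) (k : ℤ) : Summable fun d : ℕ => p (k + d) :=
  hsum.comp_injective ((add_right_injective _).comp Nat.cast_injective)

lemma measOf_Ioi_eq_add (hsum : Summable p) (k : ℤ) :
    measOf p (Ioi k) = p (k + 1) + measOf p (Ioi (k + 1)) := by
  rw [measOf_Ioi_eq_tsum, measOf_Ioi_eq_tsum, (hsum.comp_add_natCast (k + 1)).tsum_eq_zero_add]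
  simp only [Nat.cast_zero, add_zero, Nat.cast_add, Nat.cast_one]
  congr 1
  exact tsum_congr fun d => by ring_nf

lemma measOf_Ioi_mul_le_sq (h0 : ∀ n, 0 ≤ p n) (hsum : Summable p)
    (hlc : ∀ n : ℤ, p (n - 1) * p (n + 1) ≤ p n ^ 2) (hcs : ContigSupportInt p) (k : ℤ) :
    measOf p (Ioi k) * measOf p (Ioi (k + 2)) ≤ measOf p (Ioi (k + 1)) ^ 2 := by
  -- with `G k = measOf p (Ioi k)`:
  -- `G (k+1)² - G k * G (k+2) = p (k+2) * G (k+1) - p (k+1) * G (k+2)`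
  have hcross : p (k + 1) * measOf p (Ioi (k + 2)) ≤ p (k + 2) * measOf p (Ioi (k + 1)) := by
    rw [measOf_Ioi_eq_tsum, measOf_Ioi_eq_tsum, ← tsum_mul_left, ← tsum_mul_left]
    refine ((hsum.comp_add_natCast _).mul_left _).tsum_le_tsum (fun d => ?_)
      ((hsum.comp_add_natCast _).mul_left _)
    have h := outer_mul_le_inner_mul h0 hlc hcs (show k + 2 ≤ k + 2 + d by omega)
    rwa [show k + 2 - 1 = k + 1 by ring, show k + 2 + d + 1 = k + 2 + 1 + d by ring,
      show k + 2 + (d : ℤ) = k + 1 + 1 + d by ring] at h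
  have h1 := measOf_Ioi_eq_add hsum k
  have h2 := measOf_Ioi_eq_add hsum (k + 1)
  rw [add_assoc, one_add_one_eq_two] at h2
  rw [h1]
  linear_combination hcross - measOf p (Ioi (k + 1)) * h2

end Measure

lemma half_pow_eq_exp (n : ℕ) : (1 / 2 : ℝ) ^ n = exp (-(n * log 2)) := by
  rw [neg_mul_eq_mul_neg, exp_nat_mul, exp_neg, exp_log two_pos, one_div]

lemma le_exp_of_pow_le_half_pow {x s : ℝ} {k n : ℕ} (hx : 0 ≤ x) (hk : k ≠ 0)
    (hkn : k * s ≤ n) (h : x ^ k ≤ (1 / 2) ^ n) : x ≤ exp (-(s * log 2)) := by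
  rw [← pow_le_pow_iff_left₀ hx (exp_pos _).le hk, ← exp_nat_mul]
  refine h.trans ((half_pow_eq_exp n).trans_le (exp_le_exp.mpr ?_))
  nlinarith [log_pos one_lt_two]

lemma exp_le_of_half_pow_le_pow {x s : ℝ} {k n : ℕ} (hx : 0 ≤ x) (hn : n ≠ 0)
    (hkn : k ≤ n * s) (h : (1 / 2) ^ k ≤ x ^ n) : exp (-(s * log 2)) ≤ x := by
  rw [← pow_le_pow_iff_left₀ (exp_pos _).le hx hn, ← exp_nat_mul]
  refine (exp_le_exp.mpr ?_).trans ((half_pow_eq_exp k).symm.trans_le h)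
  nlinarith [log_pos one_lt_two]

structure IsLogConcaveTail (u : ℕ → ℝ) : Prop where
  nonneg : ∀ n, 0 ≤ u n
  antitone : Antitone u
  mul_le_sq : ∀ n, u n * u (n + 2) ≤ u (n + 1) ^ 2
  zero : u 0 = 1

namespace IsLogConcaveTail

variable {u : ℕ → ℝ}

lemma pow_succ_le_pow_succ (hu : IsLogConcaveTail u) (n : ℕ) :
    u (n + 1) ^ n ≤ u n ^ (n + 1) := by
  induction n with
  | zero => simp [hu.zero]
  | succ n ih =>
    rcases (hu.nonneg (n + 1)).eq_or_lt with hzero | hpos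
    · have : u (n + 2) = 0 := le_antisymm (hzero ▸ hu.antitone (by omega)) (hu.nonneg _)
      rw [this, zero_pow (by omega)]
      exact pow_nonneg (hu.nonneg _) _
    · refine le_of_mul_le_mul_right ?_ (pow_pos hpos n)
      calc u (n + 2) ^ (n + 1) * u (n + 1) ^ n
          ≤ u (n + 2) ^ (n + 1) * u n ^ (n + 1) :=
            mul_le_mul_of_nonneg_left ih (pow_nonneg (hu.nonneg _) _)
        _ = (u n * u (n + 2)) ^ (n + 1) := by ring
        _ ≤ (u (n + 1) ^ 2) ^ (n + 1) :=
            pow_le_pow_left₀ (mul_nonneg (hu.nonneg _) (hu.nonneg _)) (hu.mul_le_sq n) _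
        _ = u (n + 1) ^ (n + 1 + 1) * u (n + 1) ^ n := by ring

lemma pow_le_pow (hu : IsLogConcaveTail u) {k n : ℕ} (hkn : k ≤ n) : u n ^ k ≤ u k ^ n := by
  induction n, hkn using Nat.le_induction with
  | base => rfl
  | succ n hkn ih =>
    rcases Nat.eq_zero_or_pos n with rfl | hn
    · simp [Nat.le_zero.mp hkn, hu.zero]
    have h0 := hu.nonneg
    rw [← pow_le_pow_iff_left₀ (pow_nonneg (h0 _) _) (pow_nonneg (h0 _) _) hn.ne']
    calc (u (n + 1) ^ k) ^ n = (u (n + 1) ^ n) ^ k := by ring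
      _ ≤ (u n ^ (n + 1)) ^ k :=
          pow_le_pow_left₀ (pow_nonneg (h0 _) _) (hu.pow_succ_le_pow_succ n) _
      _ = (u n ^ k) ^ (n + 1) := by ring
      _ ≤ (u k ^ n) ^ (n + 1) := pow_le_pow_left₀ (pow_nonneg (h0 _) _) ih _
      _ = (u k ^ (n + 1)) ^ n := by ring

lemma le_exp_of_floor_le_half (hu : IsLogConcaveTail u) {m t : ℝ} (hm : 1 ≤ m) (ht : 1 < t)
    (hmed : u ⌊m⌋₊ ≤ 1 / 2) : u ⌊m * t⌋₊ ≤ exp (-(t * log 2 / 2)) := by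
  set K := ⌊m⌋₊
  set N := ⌊m * t⌋₊
  have hK : 1 ≤ K := Nat.le_floor (by exact_mod_cast hm)
  have hKN : K ≤ N := Nat.floor_mono (le_mul_of_one_le_right (by linarith) ht.le)
  have hKt : K * (t / 2) ≤ N := by
    have hKm : (K : ℝ) ≤ m := Nat.floor_le (by linarith)
    have hN : m * t < N + 1 := Nat.lt_floor_add_one _
    have hN1 : (1 : ℝ) ≤ N := by exact_mod_cast hK.trans hKN
    nlinarith
  rw [show t * log 2 / 2 = t / 2 * log 2 by ring]
  exact le_exp_of_pow_le_half_pow (hu.nonneg N) (by omega) hKt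
    ((hu.pow_le_pow hKN).trans (pow_le_pow_left₀ (hu.nonneg K) hmed N))

lemma one_sub_le_of_half_le_ceil (hu : IsLogConcaveTail u) {m ε : ℝ} (hε0 : 0 < ε)
    (hε1 : ε < 1) (hmed : 1 / 2 ≤ u (⌈m⌉₊ - 1)) :
    1 - 2 * log 2 * ε ≤ u ⌊m * ε⌋₊ := by
  set L := ⌊m * ε⌋₊
  set D := ⌈m⌉₊ - 1
  rcases Nat.eq_zero_or_pos L with hL | hL
  · rw [hL, hu.zero]
    nlinarith [log_pos one_lt_two]
  have hm : 0 < m := by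
    by_contra! hm
    have : L = 0 := Nat.floor_eq_zero.mpr (by nlinarith)
    omega
  have hLm : (L : ℝ) ≤ m * ε := Nat.floor_le (by positivity)
  have hLD : L ≤ D := by
    have : L < ⌈m⌉₊ := Nat.lt_ceil.mpr (hLm.trans_lt (mul_lt_of_lt_one_right hm hε1))
    omega
  have hL2D : L ≤ D * (2 * ε) := by
    have hD : m ≤ D + 1 := by
      have : ⌈m⌉₊ = D + 1 := by omega
      exact_mod_cast this ▸ Nat.le_ceil m
    have hD1 : (1 : ℝ) ≤ D := by exact_mod_cast hL.trans_le hLD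
    nlinarith
  have := exp_le_of_half_pow_le_pow (hu.nonneg L) (by omega) hL2D
    ((pow_le_pow_left₀ (by norm_num) hmed L).trans (hu.pow_le_pow hLD))
  linarith [add_one_le_exp (-(2 * ε * log 2))]

end IsLogConcaveTail

lemma isLogConcaveTail_measOf_Ioi {p : ℤ → ℝ} (hp : IsLogConcavePMF p)
    (hvanish : ∀ n ≤ 0, p n = 0) :
    IsLogConcaveTail fun k : ℕ => measOf p (Ioi (k : ℤ)) := by
  obtain ⟨h0, hsum, htot, hlc, hcs⟩ := hp
  refine ⟨fun k => measOf_nonneg h0 _, fun j k hjk => ?_, fun k => ?_, ?_⟩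
  · exact measOf_mono h0 hsum (Ioi_subset_Ioi (by exact_mod_cast hjk))
  · simpa using measOf_Ioi_mul_le_sq h0 hsum hlc hcs k
  · have := measOf_Iic_eq_one_sub hsum htot 0
    rw [measOf_eq_zero (S := Iic 0) hvanish] at this
    simp only [Nat.cast_zero]
    linarith

lemma setOf_lt_intCast_eq_Ioi {x : ℝ} (hx : 0 ≤ x) :
    {n : ℤ | x < n} = Ioi (⌊x⌋₊ : ℤ) := by
  ext n
  rw [mem_Ioi, Int.natCast_floor_eq_floor hx]
  exact (Int.floor_lt (a := x)).symm

lemma setOf_intCast_le_eq_Iic {x : ℝ} (hx : 0 ≤ x) :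
    {n : ℤ | (n : ℝ) ≤ x} = Iic (⌊x⌋₊ : ℤ) := by
  ext n
  rw [mem_Iic, Int.natCast_floor_eq_floor hx]
  exact (Int.le_floor (a := x)).symm

lemma setOf_le_intCast_eq_Ioi {x : ℝ} (hx : 0 < x) :
    {n : ℤ | x ≤ n} = Ioi ((⌈x⌉₊ - 1 : ℕ) : ℤ) := by
  have hceil : 1 ≤ ⌈x⌉₊ := Nat.one_le_iff_ne_zero.mpr (Nat.ceil_pos.mpr hx).ne'
  ext n
  rw [mem_Ioi, Nat.cast_sub hceil, Nat.cast_one, Int.natCast_ceil_eq_ceil hx.le, sub_lt_iff_lt_add,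
    Int.lt_add_one_iff]
  exact (Int.ceil_le (a := x)).symm

/-- Deviation inequalities from the median for a discrete log-concave random variable
`X` supported on the positive integers, with median `m`: for `t > 1`,
`P(X > m·t) ≤ exp(−t·log 2 / 2)`, and for `ε ∈ (0,1)`, `P(X ≤ m·ε) ≤ 2·(log 2)·ε`. -/
theorem deviations_median_positive (p : ℤ → ℝ) (hp : IsLogConcavePMF p)
    (hsupp : ∀ n : ℤ, 0 < p n → 1 ≤ n) (m : ℝ)
    (hm1 : 1 / 2 ≤ measOf p { n : ℤ | m ≤ (n : ℝ) })
    (hm2 : 1 / 2 ≤ measOf p { n : ℤ | (n : ℝ) ≤ m }) :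
    (∀ t : ℝ, 1 < t →
      measOf p { n : ℤ | m * t < (n : ℝ) } ≤ Real.exp (-(t * Real.log 2 / 2))) ∧
    (∀ ε : ℝ, 0 < ε → ε < 1 →
      measOf p { n : ℤ | (n : ℝ) ≤ m * ε } ≤ 2 * Real.log 2 * ε) := by
  have hvanish (n : ℤ) (hn : n ≤ 0) : p n = 0 :=
    (hp.1 n).eq_or_lt.elim Eq.symm fun hpos => absurd (hsupp n hpos) (by omega)
  have hu := isLogConcaveTail_measOf_Ioi hp hvanish
  obtain ⟨-, hsum, htot, -⟩ := hp
  have hIic := measOf_Iic_eq_one_sub hsum htot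
  have hm : 1 ≤ m := by
    by_contra! hm
    have : measOf p {n : ℤ | (n : ℝ) ≤ m} = 0 := measOf_eq_zero fun n hn =>
      hvanish n (Int.lt_add_one_iff.mp (by exact_mod_cast hn.trans_lt hm))
    linarith
  refine ⟨fun t ht => ?_, fun ε hε0 hε1 => ?_⟩
  · rw [setOf_lt_intCast_eq_Ioi (by positivity)]
    refine hu.le_exp_of_floor_le_half hm ht ?_
    have := hIic ⌊m⌋₊
    rw [← setOf_intCast_le_eq_Iic (by linarith)] at this
    linarith
  · rw [setOf_intCast_le_eq_Iic (by positivity), hIic]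
    have := hu.one_sub_le_of_half_le_ceil hε0 hε1
      (by rwa [setOf_le_intCast_eq_Ioi (by linarith)] at hm1)
    linarith
end

section
/- Let c > 0 and let X be a truncated geometric random variable on ℕ, i.e., with probability mass function p(n) = C·pⁿ·1_{[k,l]}(n) for some C > 0, p > 0, and k ≤ l in ℕ. If E[X] ≤ c, then for all t ≥ c, P(X > t) ≤ e·exp(−2t/(5(c+1))). In particular, if c ≥ 1, then P(X > t) ≤ e·exp(−t/(5c)). -/
/-!
The tail `T m = P(X ≥ m)` of a truncated geometric law is log-concave in `m`: from `k` on this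
is an identity between geometric sums, and below `k` the tail is constant. Since `T 0 = 1`,
log-concavity gives `T j ≥ T m ^ (j / m)` for `j ≤ m`. Writing `T m = exp (-σ)`, the tail-sum
formula `E X = ∑_{j ≥ 1} T j` yields `c ≥ ∑_{j=1}^m exp (-σ j / m) ≥ (m - σ) / (1 + σ)`, i.e.
`P(X ≥ m) ≤ exp (-(m - c) / (c + 1))`, which is stronger than the claimed bound.
-/

open Finset Real

theorem mul_sub_le_mul_sub_of_concave {g : ℕ → ℝ} {m : ℕ}
    (hg : ∀ i, i + 2 ≤ m → g i + g (i + 2) ≤ 2 * g (i + 1)) {j : ℕ} (hjm : j ≤ m) :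
    j * (g m - g 0) ≤ m * (g j - g 0) := by
  have slope : ∀ i, i + 1 ≤ m → (i : ℝ) * (g (i + 1) - g 0) ≤ (i + 1) * (g i - g 0) := by
    intro i
    induction i with
    | zero => simp
    | succ i ih =>
      intro hi
      have hconc := mul_le_mul_of_nonneg_left (hg i (by omega)) (by positivity : (0 : ℝ) ≤ i + 1)
      push_cast
      linarith [ih (by omega)]
  suffices ∀ n, j ≤ n → n ≤ m → (j : ℝ) * (g n - g 0) ≤ n * (g j - g 0) from this m hjm le_rfl
  intro n hjn
  induction n, hjn using Nat.le_induction with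
  | base => exact fun _ => le_rfl
  | succ n hjn ih =>
    intro hnm
    rcases Nat.eq_zero_or_pos n with rfl | hn
    · simp [show j = 0 by omega]
    have hn' : (0 : ℝ) < n := by exact_mod_cast hn
    refine le_of_mul_le_mul_left ?_ hn'
    push_cast
    calc (n : ℝ) * (j * (g (n + 1) - g 0)) = j * (n * (g (n + 1) - g 0)) := by ring
      _ ≤ j * ((n + 1) * (g n - g 0)) := mul_le_mul_of_nonneg_left (slope n hnm) j.cast_nonneg
      _ = (n + 1) * (j * (g n - g 0)) := by ring
      _ ≤ (n + 1) * (n * (g j - g 0)) := mul_le_mul_of_nonneg_left (ih (by omega)) (by positivity)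
      _ = n * ((n + 1) * (g j - g 0)) := by ring

theorem sub_le_one_add_mul_sum_exp {σ : ℝ} (hσ : 0 ≤ σ) {m : ℕ} (hm : 0 < m) :
    m - σ ≤ (1 + σ) * ∑ i ∈ range m, exp (-(σ * (i + 1) / m)) := by
  rcases hσ.eq_or_lt with rfl | hσ
  · simp
  have hm' : (0 : ℝ) < m := by exact_mod_cast hm
  set θ := exp (-(σ / m))
  have hθ1 : θ < 1 := exp_lt_one_iff.2 (neg_neg_of_pos (by positivity))
  have hθ : m - σ ≤ m * θ := by
    have := add_one_le_exp (-(σ / m))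
    rw [mul_comm]; field_simp at this ⊢; linarith
  have hgeom : (∑ i ∈ range m, exp (-(σ * (i + 1) / m))) * (1 - θ) = θ * (1 - exp (-σ)) := by
    have hterm : ∀ i : ℕ, exp (-(σ * (i + 1) / m)) = θ * θ ^ i := by
      intro i; rw [← pow_succ', ← exp_nat_mul]; congr 1; push_cast; ring
    have hθm : θ ^ m = exp (-σ) := by
      rw [← exp_nat_mul]; congr 1; field_simp
    rw [sum_congr rfl (fun i _ => hterm i), ← mul_sum, mul_assoc, geom_sum_mul_neg, hθm]
  have hexp : σ ≤ (1 + σ) * (1 - exp (-σ)) := by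
    have := add_one_le_exp σ
    rw [exp_neg]; field_simp; nlinarith
  refine le_of_mul_le_mul_right ?_ (sub_pos.2 hθ1)
  rw [mul_assoc, hgeom]
  nlinarith [exp_pos (-(σ / m))]

theorem le_exp_of_logConcave_of_sum_le {T : ℕ → ℝ} {m : ℕ} {c : ℝ} (hm : 0 < m)
    (hpos : ∀ j ≤ m, 0 < T j) (h0 : T 0 = 1) (hm1 : T m ≤ 1)
    (hlc : ∀ i, i + 2 ≤ m → T i * T (i + 2) ≤ T (i + 1) ^ 2)
    (hsum : ∑ i ∈ range m, T (i + 1) ≤ c) :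
    T m ≤ exp (-((m - c) / (c + 1))) := by
  have hm' : (0 : ℝ) < m := by exact_mod_cast hm
  set σ := -log (T m)
  have hσ : 0 ≤ σ := neg_nonneg.2 (log_nonpos (hpos m le_rfl).le hm1)
  have hlogc : ∀ i, i + 2 ≤ m → log (T i) + log (T (i + 2)) ≤ 2 * log (T (i + 1)) := by
    intro i hi
    rw [← log_mul (hpos i (by omega)).ne' (hpos (i + 2) hi).ne', two_mul, ← log_mul
      (hpos (i + 1) (by omega)).ne' (hpos (i + 1) (by omega)).ne', ← sq]
    exact log_le_log (mul_pos (hpos i (by omega)) (hpos (i + 2) hi)) (hlc i hi)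
  have hlower : ∀ i ∈ range m, exp (-(σ * (i + 1) / m)) ≤ T (i + 1) := by
    intro i hi
    have hi : i + 1 ≤ m := mem_range.1 hi
    have hchord := mul_sub_le_mul_sub_of_concave hlogc hi
    rw [h0, log_one, sub_zero, sub_zero] at hchord
    rw [← exp_log (hpos (i + 1) hi), exp_le_exp,
      show -(σ * (i + 1) / m) = (i + 1) * log (T m) / m by ring, div_le_iff₀ hm']
    push_cast at hchord
    linarith
  have hsum_pos : 0 < ∑ i ∈ range m, T (i + 1) :=
    sum_pos (fun i hi => hpos (i + 1) (mem_range.1 hi)) (nonempty_range_iff.2 hm.ne')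
  have hmσ : m - σ ≤ (1 + σ) * c :=
    (sub_le_one_add_mul_sum_exp hσ hm).trans
      (mul_le_mul_of_nonneg_left ((sum_le_sum hlower).trans hsum) (by positivity))
  rw [← exp_log (hpos m le_rfl), exp_le_exp, neg_le_neg_iff.symm, neg_neg,
    div_le_iff₀ (by linarith)]
  linarith

theorem geom_sum_Ico_mul_le_sq {ρ : ℝ} (hρ : 0 ≤ ρ) (i N : ℕ) :
    (∑ n ∈ Ico i N, ρ ^ n) * ∑ n ∈ Ico (i + 2) N, ρ ^ n ≤ (∑ n ∈ Ico (i + 1) N, ρ ^ n) ^ 2 := by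
  rcases le_or_gt N (i + 1) with hN | hN
  · simp [Ico_eq_empty_of_le hN, Ico_eq_empty_of_le (hN.trans (Nat.le_succ _))]
  set S := ∑ n ∈ Ico (i + 1) N, ρ ^ n
  have hS : S * (1 - ρ) = ρ ^ (i + 1) - ρ ^ N := geom_sum_Ico_mul_neg ρ hN.le
  have hfirst : ∑ n ∈ Ico i N, ρ ^ n = ρ ^ i + S := sum_eq_sum_Ico_succ_bot (by omega) _
  have hlast : ∑ n ∈ Ico (i + 2) N, ρ ^ n = S - ρ ^ (i + 1) := by
    rw [eq_sub_iff_add_eq', ← sum_eq_sum_Ico_succ_bot hN]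
  rw [hfirst, hlast, show (ρ ^ i + S) * (S - ρ ^ (i + 1)) = S ^ 2 - ρ ^ i * ρ ^ N by
    linear_combination ρ ^ i * hS]
  exact sub_le_self _ (by positivity)

theorem sum_range_sum_Ico_eq_sum_range_nsmul {M : Type*} [AddCommMonoid M] (f : ℕ → M) (N : ℕ) :
    ∑ i ∈ range N, ∑ n ∈ Ico (i + 1) N, f n = ∑ n ∈ range N, n • f n := by
  rw [range_eq_Ico, sum_Ico_Ico_comm' 0 N (fun _ n => f n)]
  simp

theorem tsum_indicator_lt_eq_sum_Ico {M : Type*} [AddCommMonoid M] [TopologicalSpace M]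
    {f : ℕ → M} {l : ℕ} (hf : ∀ n, l < n → f n = 0) {t : ℝ} (ht : 0 ≤ t) :
    ∑' n, {m : ℕ | t < m}.indicator f n = ∑ n ∈ Ico (⌊t⌋₊ + 1) (l + 1), f n := by
  have hlt : ∀ n : ℕ, t < n ↔ ⌊t⌋₊ + 1 ≤ n := fun n => (Nat.floor_lt ht).symm
  rw [tsum_eq_sum (s := Ico (⌊t⌋₊ + 1) (l + 1))]
  · exact sum_congr rfl fun n hn =>
      Set.indicator_of_mem (show n ∈ {m : ℕ | t < m} from (hlt n).2 (mem_Ico.1 hn).1) f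
  · intro n hn
    rw [mem_Ico, not_and_or, not_le, not_lt] at hn
    rcases hn with hn | hn
    · exact Set.indicator_of_notMem (show n ∉ {m : ℕ | t < m} from fun h => by
        have := (hlt n).1 h; omega) f
    · exact Set.indicator_apply_eq_zero.2 fun _ => hf n hn

def truncGeom (C ρ : ℝ) (k l n : ℕ) : ℝ := if k ≤ n ∧ n ≤ l then C * ρ ^ n else 0

section truncGeom

variable {C ρ : ℝ} {k l : ℕ}

theorem truncGeom_nonneg (hC : 0 ≤ C) (hρ : 0 ≤ ρ) (n : ℕ) : 0 ≤ truncGeom C ρ k l n := by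
  unfold truncGeom; split <;> positivity

theorem truncGeom_eq_zero_of_lt {n : ℕ} (h : l < n) : truncGeom C ρ k l n = 0 :=
  if_neg (by omega)

theorem sum_Ico_truncGeom (i : ℕ) :
    ∑ n ∈ Ico i (l + 1), truncGeom C ρ k l n = C * ∑ n ∈ Ico (max i k) (l + 1), ρ ^ n := by
  unfold truncGeom
  rw [mul_sum, ← sum_filter]
  congr 1
  ext n
  simp only [mem_filter, mem_Ico]
  omega

theorem sum_Ico_truncGeom_pos (hC : 0 < C) (hρ : 0 < ρ) (hkl : k ≤ l) {i : ℕ} (hi : i ≤ l) :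
    0 < ∑ n ∈ Ico i (l + 1), truncGeom C ρ k l n := by
  rw [sum_Ico_truncGeom]
  exact mul_pos hC (sum_pos (fun _ _ => by positivity) ⟨l, by simp; omega⟩)

theorem sum_Ico_truncGeom_mul_le_sq (hρ : 0 ≤ ρ) (i : ℕ) :
    (∑ n ∈ Ico i (l + 1), truncGeom C ρ k l n) * ∑ n ∈ Ico (i + 2) (l + 1), truncGeom C ρ k l n
      ≤ (∑ n ∈ Ico (i + 1) (l + 1), truncGeom C ρ k l n) ^ 2 := by
  simp only [sum_Ico_truncGeom]
  rw [mul_mul_mul_comm, ← sq, mul_pow]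
  refine mul_le_mul_of_nonneg_left ?_ (sq_nonneg C)
  rcases le_or_gt k i with hki | hik
  · rw [max_eq_left hki, max_eq_left (by omega), max_eq_left (by omega)]
    exact geom_sum_Ico_mul_le_sq hρ i (l + 1)
  · rw [max_eq_right hik.le, max_eq_right (show i + 1 ≤ k by omega), sq]
    exact mul_le_mul_of_nonneg_left
      (sum_le_sum_of_subset_of_nonneg (Ico_subset_Ico_left (le_max_right _ _))
        fun _ _ _ => by positivity)
      (sum_nonneg fun _ _ => by positivity)

theorem sum_Ico_truncGeom_le_exp (hC : 0 < C) (hρ : 0 < ρ) (hkl : k ≤ l) {c : ℝ}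
    (hsum : ∑ n ∈ range (l + 1), truncGeom C ρ k l n = 1)
    (hmean : ∑ n ∈ range (l + 1), n * truncGeom C ρ k l n ≤ c) {m : ℕ} (hm : 0 < m) :
    ∑ n ∈ Ico m (l + 1), truncGeom C ρ k l n ≤ exp (-((m - c) / (c + 1))) := by
  obtain hlm | hml := lt_or_ge l m
  · rw [Ico_eq_empty_of_le hlm, sum_empty]; positivity
  set T := fun i => ∑ n ∈ Ico i (l + 1), truncGeom C ρ k l n
  have hT0 : T 0 = 1 := by rw [← hsum, range_eq_Ico]
  have hTnn : ∀ i, 0 ≤ T i := fun i => sum_nonneg fun n _ => truncGeom_nonneg hC.le hρ.le n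
  have hTm : T m ≤ 1 := hT0 ▸ sum_le_sum_of_subset_of_nonneg (Ico_subset_Ico_left (Nat.zero_le m))
    fun n _ _ => truncGeom_nonneg hC.le hρ.le n
  have hTmean : ∑ i ∈ range m, T (i + 1) ≤ c := calc
    _ ≤ ∑ i ∈ range (l + 1), T (i + 1) :=
      sum_le_sum_of_subset_of_nonneg (range_subset_range.2 (by omega)) fun i _ _ => hTnn (i + 1)
    _ = ∑ n ∈ range (l + 1), n * truncGeom C ρ k l n := by
      simpa only [nsmul_eq_mul] using sum_range_sum_Ico_eq_sum_range_nsmul (truncGeom C ρ k l) _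
    _ ≤ c := hmean
  exact le_exp_of_logConcave_of_sum_le hm
    (fun j hj => sum_Ico_truncGeom_pos hC hρ hkl (hj.trans hml)) hT0 hTm
    (fun i _ => sum_Ico_truncGeom_mul_le_sq hρ.le i) hTmean

end truncGeom

/-- Deviation bound for truncated geometric random variables: if `X` has p.m.f.
`P(n) = C·ρⁿ·1_{[k,l]}(n)` on `ℕ` and `E[X] ≤ c`, then for all `t ≥ c`,
`P(X > t) ≤ e·exp(−2t/(5(c+1)))`; in particular, if `c ≥ 1`,
`P(X > t) ≤ e·exp(−t/(5c))`. -/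
theorem truncated_geometric_deviation (c : ℝ) (hc : 0 < c)
    (C ρ : ℝ) (hC : 0 < C) (hρ : 0 < ρ) (k l : ℕ) (hkl : k ≤ l)
    (P : ℕ → ℝ) (hP : ∀ n : ℕ, P n = if k ≤ n ∧ n ≤ l then C * ρ ^ n else 0)
    (hsum : (∑' n : ℕ, P n) = 1)
    (hmean : (∑' n : ℕ, (n : ℝ) * P n) ≤ c) :
    (∀ t : ℝ, c ≤ t →
      (∑' n : ℕ, ({ m : ℕ | t < (m : ℝ) }.indicator P n)) ≤
        Real.exp 1 * Real.exp (-(2 * t / (5 * (c + 1))))) ∧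
    (1 ≤ c → ∀ t : ℝ, c ≤ t →
      (∑' n : ℕ, ({ m : ℕ | t < (m : ℝ) }.indicator P n)) ≤
        Real.exp 1 * Real.exp (-(t / (5 * c)))) := by
  obtain rfl : P = truncGeom C ρ k l := funext hP
  have hvanish : ∀ n, l < n → truncGeom C ρ k l n = 0 := fun n => truncGeom_eq_zero_of_lt
  rw [tsum_eq_sum (s := range (l + 1)) fun n hn => hvanish n (by simpa using hn)] at hsum
  rw [tsum_eq_sum (s := range (l + 1)) fun n hn => by
    rw [hvanish n (by simpa using hn), mul_zero]] at hmean
  have main : ∀ t : ℝ, c ≤ t →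
      ∑' n, {m : ℕ | t < m}.indicator (truncGeom C ρ k l) n ≤
        exp 1 * exp (-(2 * t / (5 * (c + 1)))) := by
    intro t ht
    have ht0 : 0 ≤ t := hc.le.trans ht
    rw [tsum_indicator_lt_eq_sum_Ico hvanish ht0]
    calc _ ≤ exp (-(((⌊t⌋₊ + 1 : ℕ) - c) / (c + 1))) :=
          sum_Ico_truncGeom_le_exp hC hρ hkl hsum hmean (Nat.succ_pos _)
      _ ≤ exp (-((t - c) / (c + 1))) := by
          gcongr; push_cast; exact (Nat.lt_floor_add_one t).le
      _ ≤ exp 1 * exp (-(2 * t / (5 * (c + 1)))) := by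
          rw [← exp_add, exp_le_exp]
          field_simp
          linarith
  refine ⟨main, fun hc1 t ht => (main t ht).trans ?_⟩
  gcongr exp 1 * exp (-?_)
  rw [div_le_div_iff₀ (by positivity) (by positivity)]
  nlinarith
end

section
/- (Reverse Jensen inequality) Let X be a discrete log-concave random variable supported on ℕ. Then for all real numbers 1 ≤ r ≤ s, E[X^s]^{1/s} ≤ 5·s·(s·e)^{1/s}·(E[X^r]^{1/r} + 1)/2. In particular, if E[X] ≥ 1, then E[X^s]^{1/s} ≤ 5·s·(s·e)^{1/s}·E[X^r]^{1/r}. -/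
/-!
The tail `T m = P(X ≥ m)` of a log-concave law on `ℕ` is again log-concave, hence
submultiplicative: `T (j * t) ≤ T t ^ j`. Markov's inequality gives `T t ≤ 1 / 3` for
`t = ⌊3 ‖X‖_r⌋ + 1`. Bounding `n ^ s ≤ (2 s t / e) ^ s · e ^ ((⌊n / t⌋ + 1) / 2)`
(from `y ^ a ≤ (a / e) ^ a · e ^ y`) and summing against the geometric tails gives
`E[X ^ s] ≤ (2 s t / e) ^ s · e`, and `s`-th roots give the bound.
-/

open Finset Real

structure LogConcaveSeq (g : ℕ → ℝ) : Prop where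
  nonneg : ∀ n, 0 ≤ g n
  mul_le_sq : ∀ n, g n * g (n + 2) ≤ g (n + 1) ^ 2
  pos_of_le_of_le : ∀ a b c, a ≤ b → b ≤ c → 0 < g a → 0 < g c → 0 < g b

namespace LogConcaveSeq

variable {g : ℕ → ℝ}

theorem mul_apply_succ_le_of_le (hg : LogConcaveSeq g) {m n : ℕ} (hmn : m ≤ n) :
    g m * g (n + 1) ≤ g (m + 1) * g n := by
  obtain ⟨k, rfl⟩ := Nat.exists_eq_add_of_le hmn
  induction k generalizing m with
  | zero => rw [add_zero, mul_comm]
  | succ k ih =>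
    have hprev := ih (m := m + 1) (by omega)
    rw [show m + 1 + k = m + (k + 1) by omega, show m + 1 + 1 = m + 2 by omega] at hprev
    rcases (hg.nonneg (m + 2)).eq_or_lt with h2 | h2
    · -- a zero at `m + 2` forces a zero at `m` or at `m + k + 2`
      have : g m * g (m + (k + 1) + 1) = 0 := by
        by_contra hne
        obtain ⟨hm, hk⟩ := mul_ne_zero_iff.mp hne
        exact (hg.pos_of_le_of_le m (m + 2) _ (by omega) (by omega)
          ((hg.nonneg m).lt_of_ne' hm) ((hg.nonneg _).lt_of_ne' hk)).ne h2
      rw [this]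
      exact mul_nonneg (hg.nonneg _) (hg.nonneg _)
    · refine le_of_mul_le_mul_right ?_ h2
      calc g m * g (m + (k + 1) + 1) * g (m + 2)
          = g m * g (m + 2) * g (m + (k + 1) + 1) := by ring
        _ ≤ g (m + 1) ^ 2 * g (m + (k + 1) + 1) :=
          mul_le_mul_of_nonneg_right (hg.mul_le_sq m) (hg.nonneg _)
        _ = g (m + 1) * (g (m + 1) * g (m + (k + 1) + 1)) := by ring
        _ ≤ g (m + 1) * (g (m + 2) * g (m + (k + 1))) :=
          mul_le_mul_of_nonneg_left hprev (hg.nonneg _)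
        _ = g (m + 1) * g (m + (k + 1)) * g (m + 2) := by ring

theorem mul_apply_add_le (hg : LogConcaveSeq g) (a b : ℕ) : g 0 * g (a + b) ≤ g a * g b := by
  wlog hab : a ≤ b generalizing a b
  · rw [add_comm, mul_comm (g a)]
    exact this b a (by omega)
  induction a generalizing b with
  | zero => rw [zero_add, mul_comm]
  | succ a ih =>
    calc g 0 * g (a + 1 + b) = g 0 * g (a + (b + 1)) := by rw [add_right_comm, add_assoc]
      _ ≤ g a * g (b + 1) := ih (b + 1) (by omega)
      _ ≤ g (a + 1) * g b := hg.mul_apply_succ_le_of_le (by omega)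

theorem apply_mul_le_pow (hg : LogConcaveSeq g) (h0 : g 0 = 1) (t j : ℕ) :
    g (j * t) ≤ g t ^ j := by
  induction j with
  | zero => simp [h0]
  | succ j ih =>
    calc g ((j + 1) * t) = g 0 * g (j * t + t) := by rw [h0, one_mul, add_mul, one_mul]
      _ ≤ g (j * t) * g t := hg.mul_apply_add_le _ _
      _ ≤ g t ^ j * g t := mul_le_mul_of_nonneg_right ih (hg.nonneg t)
      _ = g t ^ (j + 1) := (pow_succ _ _).symm

end LogConcaveSeq

noncomputable def tailSum (f : ℕ → ℝ) (m : ℕ) : ℝ := ∑' k, f (k + m)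

section tailSum

variable {f : ℕ → ℝ}

theorem tailSum_nonneg (hf : ∀ n, 0 ≤ f n) (m : ℕ) : 0 ≤ tailSum f m :=
  tsum_nonneg fun _ => hf _

theorem tailSum_eq_add (hfs : Summable f) (m : ℕ) : tailSum f m = f m + tailSum f (m + 1) := by
  rw [tailSum, ((summable_nat_add_iff m).mpr hfs).tsum_eq_zero_add, zero_add, tailSum]
  simp only [add_right_comm _ 1 m, add_assoc]

theorem tailSum_antitone (hf : ∀ n, 0 ≤ f n) (hfs : Summable f) : Antitone (tailSum f) :=
  antitone_nat_of_succ_le fun m => by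
    rw [tailSum_eq_add hfs m]
    linarith [hf m]

theorem sum_le_tailSum (hf : ∀ n, 0 ≤ f n) (hfs : Summable f) {s : Finset ℕ} {m : ℕ}
    (hs : ∀ n ∈ s, m ≤ n) : ∑ n ∈ s, f n ≤ tailSum f m := by
  rw [← Finset.sum_preimage (· + m) s (add_left_injective m).injOn f
    fun n hn hnm => (hnm ⟨n - m, Nat.sub_add_cancel (hs n hn)⟩).elim]
  exact ((summable_nat_add_iff m).mpr hfs).sum_le_tsum _ fun k _ => hf _

theorem LogConcaveSeq.tail (hf : LogConcaveSeq f) (hfs : Summable f) :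
    LogConcaveSeq (tailSum f) where
  nonneg := tailSum_nonneg hf.nonneg
  mul_le_sq m := by
    have hazard : f m * tailSum f (m + 2) ≤ f (m + 1) * tailSum f (m + 1) := by
      simp only [tailSum, ← tsum_mul_left]
      refine Summable.tsum_le_tsum (fun k => ?_) (((summable_nat_add_iff _).mpr hfs).mul_left _)
        (((summable_nat_add_iff _).mpr hfs).mul_left _)
      simpa only [add_assoc] using hf.mul_apply_succ_le_of_le (show m ≤ k + (m + 1) by omega)
    calc tailSum f m * tailSum f (m + 2)
        = f m * tailSum f (m + 2) + tailSum f (m + 1) * tailSum f (m + 2) := by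
          rw [tailSum_eq_add hfs m, add_mul]
      _ ≤ f (m + 1) * tailSum f (m + 1) +
          tailSum f (m + 1) * tailSum f (m + 2) := by gcongr
      _ = tailSum f (m + 1) ^ 2 := by
          rw [tailSum_eq_add hfs (m + 1)]
          ring
  pos_of_le_of_le _ b c _ hbc _ hc := hc.trans_le (tailSum_antitone hf.nonneg hfs hbc)

end tailSum

theorem rpow_le_div_exp_rpow_mul_exp {y a : ℝ} (hy : 0 ≤ y) (ha : 0 ≤ a) :
    y ^ a ≤ (a / exp 1) ^ a * exp y := by
  rcases ha.eq_or_lt with rfl | ha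
  · simpa using one_le_exp hy
  have hlin : y ≤ a / exp 1 * exp (y / a) := by
    have := add_one_le_exp (y / a - 1)
    rw [sub_add_cancel, exp_sub] at this
    calc y = a * (y / a) := by field_simp
      _ ≤ a * (exp (y / a) / exp 1) := by gcongr
      _ = a / exp 1 * exp (y / a) := by ring
  calc y ^ a ≤ (a / exp 1 * exp (y / a)) ^ a := by gcongr
    _ = (a / exp 1) ^ a * exp y := by
      rw [mul_rpow (by positivity) (by positivity), ← exp_mul, div_mul_cancel₀ y ha.ne']

section Moments

variable {f : ℕ → ℝ}

theorem sum_range_pow_div_add_one_mul_le (hf : ∀ n, 0 ≤ f n) (hfs : Summable f) {t : ℕ}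
    (ht : 0 < t) {q y : ℝ} (hy : 1 ≤ y) (hqy : q * y < 1)
    (hT : ∀ j, tailSum f (j * t) ≤ q ^ j) (N : ℕ) :
    ∑ n ∈ range N, y ^ (n / t + 1) * f n ≤ 1 + (y - 1) / (1 - q * y) := by
  have hq : 0 ≤ q := by simpa using (tailSum_nonneg hf t).trans (by simpa using hT 1)
  have hpow : ∀ n ∈ range N,
      y ^ (n / t + 1) = 1 + (y - 1) * ∑ j ∈ range N with j * t ≤ n, y ^ j := by
    intro n hn
    have hfilter : (range N).filter (· * t ≤ n) = range (n / t + 1) := by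
      ext j
      simp only [mem_filter, mem_range, Nat.lt_succ_iff, Nat.le_div_iff_mul_le ht]
      exact ⟨fun h => h.2,
        fun h => ⟨((Nat.le_mul_of_pos_right j ht).trans h).trans_lt (mem_range.mp hn), h⟩⟩
    rw [hfilter, mul_comm, geom_sum_mul]
    ring
  -- exchanging the two sums turns each inner sum into part of a tail `tailSum f (j * t)`
  calc ∑ n ∈ range N, y ^ (n / t + 1) * f n
      = ∑ n ∈ range N, f n +
          (y - 1) * ∑ j ∈ range N, y ^ j * ∑ n ∈ range N with j * t ≤ n, f n := by
        rw [sum_congr rfl fun n hn => by rw [hpow n hn]]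
        simp only [add_mul, one_mul, sum_add_distrib, mul_assoc, mul_sum, sum_mul, sum_filter,
          ite_mul, zero_mul, mul_ite, mul_zero]
        rw [sum_comm]
    _ ≤ 1 + (y - 1) * ∑ j ∈ range N, (q * y) ^ j := by
        gcongr ?_ + _ * ?_
        · exact (sum_le_tailSum hf hfs fun _ _ => Nat.zero_le _).trans (by simpa using hT 0)
        refine sum_le_sum fun j _ => ?_
        calc y ^ j * ∑ n ∈ range N with j * t ≤ n, f n ≤ y ^ j * q ^ j := by
                gcongr
                exact (sum_le_tailSum hf hfs fun n hn => (mem_filter.mp hn).2).trans (hT j)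
            _ = (q * y) ^ j := by ring
    _ ≤ 1 + (y - 1) / (1 - q * y) := by
        rw [div_eq_mul_inv]
        gcongr
        simpa using geom_sum_Ico_le_of_lt_one (m := 0) (n := N) (by positivity) hqy

theorem natCast_rpow_le_mul_exp_pow {u : ℝ} (hu : 0 ≤ u) {t : ℕ} (ht : 0 < t) (n : ℕ) :
    (n : ℝ) ^ u ≤ (2 * u * t / exp 1) ^ u * exp (1 / 2) ^ (n / t + 1) := by
  have hn : (n : ℝ) ≤ 2 * t * ((n / t + 1 : ℕ) / 2) := by
    have : n ≤ t * (n / t + 1) := (Nat.lt_mul_div_succ n ht).le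
    field_simp
    exact_mod_cast this
  calc (n : ℝ) ^ u ≤ (2 * t * ((n / t + 1 : ℕ) / 2)) ^ u := by gcongr
    _ = (2 * t) ^ u * ((n / t + 1 : ℕ) / 2) ^ u := mul_rpow (by positivity) (by positivity)
    _ ≤ (2 * t) ^ u * ((u / exp 1) ^ u * exp ((n / t + 1 : ℕ) / 2)) := by
        gcongr
        exact rpow_le_div_exp_rpow_mul_exp (by positivity) hu
    _ = (2 * u * t / exp 1) ^ u * exp (1 / 2) ^ (n / t + 1) := by
        rw [← mul_assoc, ← mul_rpow (by positivity) (by positivity), ← exp_nat_mul]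
        ring_nf

theorem LogConcaveSeq.sum_range_rpow_mul_le (hf : LogConcaveSeq f) (hfs : Summable f)
    (hf1 : ∑' n, f n = 1) {t : ℕ} (ht : 0 < t) (hT : tailSum f t ≤ 1 / 3) {u : ℝ} (hu : 0 ≤ u)
    (N : ℕ) :
    ∑ n ∈ range N, (n : ℝ) ^ u * f n ≤ (2 * u * t / exp 1) ^ u * exp 1 := by
  have hT0 : tailSum f 0 = 1 := by simpa [tailSum] using hf1
  have htails (j : ℕ) : tailSum f (j * t) ≤ (1 / 3) ^ j :=
    ((hf.tail hfs).apply_mul_le_pow hT0 t j).trans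
      (pow_le_pow_left₀ (tailSum_nonneg hf.nonneg t) hT j)
  set x := exp (1 / 2)
  have hx1 : 1 ≤ x := one_le_exp (by norm_num)
  have hx2 : x ≤ 2 := by
    rw [← sq_le_sq₀ (by positivity) (by norm_num), ← exp_nat_mul]
    norm_num
    linarith [exp_one_lt_d9]
  have hxx : x ^ 2 = exp 1 := by rw [← exp_nat_mul]; norm_num
  have hexp : 1 + (x - 1) / (1 - 1 / 3 * x) ≤ exp 1 := by
    rw [← hxx, ← le_sub_iff_add_le', div_le_iff₀ (by linarith)]
    have : 0 ≤ x := by positivity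
    -- the inequality is `0 ≤ (x - 1) * (2 - x) * x`
    nlinarith [mul_nonneg (mul_nonneg (sub_nonneg.2 hx1) (sub_nonneg.2 hx2)) this]
  calc ∑ n ∈ range N, (n : ℝ) ^ u * f n
      ≤ ∑ n ∈ range N, (2 * u * t / exp 1) ^ u * (x ^ (n / t + 1) * f n) := by
        refine sum_le_sum fun n _ => ?_
        rw [← mul_assoc]
        exact mul_le_mul_of_nonneg_right (natCast_rpow_le_mul_exp_pow hu ht n) (hf.nonneg n)
    _ ≤ (2 * u * t / exp 1) ^ u * exp 1 := by
        rw [← mul_sum]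
        gcongr
        exact (sum_range_pow_div_add_one_mul_le hf.nonneg hfs ht hx1 (by linarith) htails N).trans
          hexp

theorem rpow_mul_tailSum_le_tsum (hf : ∀ n, 0 ≤ f n) (hfs : Summable f) {u : ℝ} (hu : 0 ≤ u)
    (hmom : Summable fun n : ℕ => (n : ℝ) ^ u * f n) (t : ℕ) :
    (t : ℝ) ^ u * tailSum f t ≤ ∑' n : ℕ, (n : ℝ) ^ u * f n := by
  rw [tailSum, ← tsum_mul_left, ← hmom.sum_add_tsum_nat_add t]
  refine le_add_of_nonneg_of_le (sum_nonneg fun n _ => by have := hf n; positivity) ?_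
  refine Summable.tsum_le_tsum (fun k => ?_) (((summable_nat_add_iff t).mpr hfs).mul_left _)
    ((summable_nat_add_iff t).mpr hmom)
  gcongr
  · exact hf _
  · linarith [k.cast_nonneg (α := ℝ)]

theorem LogConcaveSeq.summable_rpow_mul (hf : LogConcaveSeq f) (hfs : Summable f)
    (hf1 : ∑' n, f n = 1) {u : ℝ} (hu : 0 ≤ u) :
    Summable fun n : ℕ => (n : ℝ) ^ u * f n := by
  obtain ⟨m, hm⟩ := Filter.eventually_atTop.mp
    ((tendsto_sum_nat_add f).eventually (ge_mem_nhds (by norm_num : (0 : ℝ) < 1 / 3)))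
  exact summable_of_sum_range_le (fun n => mul_nonneg (by positivity) (hf.nonneg n))
    (hf.sum_range_rpow_mul_le hfs hf1 m.succ_pos (hm _ m.le_succ) hu)

theorem LogConcaveSeq.tailSum_le_one_third (hf : LogConcaveSeq f) (hfs : Summable f)
    (hf1 : ∑' n, f n = 1) {r : ℝ} (hr : 1 ≤ r) {t : ℕ}
    (ht : 3 * (∑' n : ℕ, (n : ℝ) ^ r * f n) ^ (1 / r) < t) : tailSum f t ≤ 1 / 3 := by
  set E := ∑' n : ℕ, (n : ℝ) ^ r * f n
  have hE : 0 ≤ E := tsum_nonneg fun n => mul_nonneg (by positivity) (hf.nonneg n)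
  have htpos : (0 : ℝ) < t := lt_of_le_of_lt (by positivity) ht
  have h3E : 3 * E ≤ (t : ℝ) ^ r :=
    calc 3 * E = 3 * (E ^ (1 / r)) ^ r := by
          rw [← rpow_mul hE, one_div_mul_cancel (by linarith), rpow_one]
      _ ≤ 3 ^ r * (E ^ (1 / r)) ^ r := by
          gcongr
          simpa using rpow_le_rpow_of_exponent_le (by norm_num : (1 : ℝ) ≤ 3) hr
      _ = (3 * E ^ (1 / r)) ^ r := (mul_rpow (by norm_num) (by positivity)).symm
      _ ≤ (t : ℝ) ^ r := by gcongr
  have hmarkov := rpow_mul_tailSum_le_tsum hf.nonneg hfs (u := r) (by linarith)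
    (hf.summable_rpow_mul hfs hf1 (by linarith)) t
  have htr : 0 < (t : ℝ) ^ r := by positivity
  rw [← mul_le_mul_iff_right₀ htr]
  linarith

theorem LogConcaveSeq.rpow_moment_le (hf : LogConcaveSeq f) (hfs : Summable f)
    (hf1 : ∑' n, f n = 1) {r s : ℝ} (hr : 1 ≤ r) (hrs : r ≤ s) :
    (∑' n : ℕ, (n : ℝ) ^ s * f n) ^ (1 / s) ≤
      5 * s * (s * exp 1) ^ (1 / s) *
        (((∑' n : ℕ, (n : ℝ) ^ r * f n) ^ (1 / r) + 1) / 2) := by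
  set μ := (∑' n : ℕ, (n : ℝ) ^ r * f n) ^ (1 / r)
  have hμ : 0 ≤ μ :=
    rpow_nonneg (tsum_nonneg fun n => mul_nonneg (by positivity) (hf.nonneg n)) _
  have hs : 0 < s := by linarith
  set t := ⌊3 * μ⌋₊ + 1
  have ht : 3 * μ < t := by simpa [t] using Nat.lt_floor_add_one (3 * μ)
  have ht' : (t : ℝ) ≤ 3 * (μ + 1) := by
    simp only [t, Nat.cast_add, Nat.cast_one]
    linarith [Nat.floor_le (by positivity : 0 ≤ 3 * μ)]
  have hmom : ∑' n : ℕ, (n : ℝ) ^ s * f n ≤ (2 * s * t / exp 1) ^ s * exp 1 :=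
    Real.tsum_le_of_sum_range_le (fun n => mul_nonneg (by positivity) (hf.nonneg n))
      (hf.sum_range_rpow_mul_le hfs hf1 (by positivity)
        (hf.tailSum_le_one_third hfs hf1 hr ht) hs.le)
  calc (∑' n : ℕ, (n : ℝ) ^ s * f n) ^ (1 / s)
      ≤ ((2 * s * t / exp 1) ^ s * exp 1) ^ (1 / s) := by
        gcongr
        exact tsum_nonneg fun n => mul_nonneg (by positivity) (hf.nonneg n)
    _ = 2 * s * t / exp 1 * exp 1 ^ (1 / s) := by
        rw [mul_rpow (by positivity) (by positivity), one_div, rpow_rpow_inv (by positivity) hs.ne']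
    _ ≤ 5 * s * ((μ + 1) / 2) * (s * exp 1) ^ (1 / s) := by
        gcongr
        · rw [div_le_iff₀ (exp_pos 1)]
          have he : 0 ≤ exp 1 - 12 / 5 := by linarith [exp_one_gt_d9]
          nlinarith [mul_nonneg (mul_nonneg hs.le (by linarith : 0 ≤ μ + 1)) he,
            mul_nonneg hs.le (sub_nonneg.2 ht')]
        · nlinarith [exp_pos 1]
    _ = 5 * s * (s * exp 1) ^ (1 / s) * ((μ + 1) / 2) := by ring

theorem LogConcaveSeq.tsum_natCast_mul_le (hf : LogConcaveSeq f) (hfs : Summable f)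
    (hf1 : ∑' n, f n = 1) {r : ℝ} (hr : 1 ≤ r) :
    ∑' n : ℕ, (n : ℝ) * f n ≤ ∑' n : ℕ, (n : ℝ) ^ r * f n := by
  refine Summable.tsum_le_tsum (fun n => ?_)
    (by simpa using hf.summable_rpow_mul hfs hf1 zero_le_one)
    (hf.summable_rpow_mul hfs hf1 (by linarith))
  refine mul_le_mul_of_nonneg_right ?_ (hf.nonneg n)
  rcases n.eq_zero_or_pos with rfl | hn
  · simpa using rpow_nonneg le_rfl r
  · exact self_le_rpow_of_one_le (by exact_mod_cast hn) hr

end Moments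

theorem tsum_int_eq_tsum_natCast {g : ℤ → ℝ} (hg : ∀ n < 0, g n = 0) :
    ∑' n : ℤ, g n = ∑' n : ℕ, g n :=
  (Nat.cast_injective.tsum_eq fun n hn =>
    ⟨n.toNat, Int.toNat_of_nonneg (not_lt.mp fun h => hn (hg n h))⟩).symm

/-- Reverse Jensen inequality for discrete log-concave random variables supported on
`ℕ`: for all `1 ≤ r ≤ s`,
`E[X^s]^{1/s} ≤ 5·s·(s·e)^{1/s}·(E[X^r]^{1/r} + 1)/2`; in particular, if `E[X] ≥ 1`,
then `E[X^s]^{1/s} ≤ 5·s·(s·e)^{1/s}·E[X^r]^{1/r}`. -/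
theorem reverse_jensen (p : ℤ → ℝ) (hp : IsLogConcavePMF p)
    (hsupp : ∀ n : ℤ, 0 < p n → 0 ≤ n)
    (r s : ℝ) (hr : 1 ≤ r) (hrs : r ≤ s) :
    (∑' n : ℤ, (n : ℝ) ^ s * p n) ^ (1 / s) ≤
      5 * s * (s * Real.exp 1) ^ (1 / s) *
        (((∑' n : ℤ, (n : ℝ) ^ r * p n) ^ (1 / r) + 1) / 2) ∧
    (1 ≤ ∑' n : ℤ, (n : ℝ) * p n →
      (∑' n : ℤ, (n : ℝ) ^ s * p n) ^ (1 / s) ≤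
        5 * s * (s * Real.exp 1) ^ (1 / s) *
          (∑' n : ℤ, (n : ℝ) ^ r * p n) ^ (1 / r)) := by
  obtain ⟨hp0, hps, hp1, hplc, hpcon⟩ := hp
  have hneg (n : ℤ) (hn : n < 0) : p n = 0 :=
    (hp0 n).antisymm' (not_lt.mp fun h => (hsupp n h).not_gt hn)
  have hf : LogConcaveSeq fun n : ℕ => p n :=
    ⟨fun n => hp0 n, fun n => by simpa [add_assoc, one_add_one_eq_two] using hplc (n + 1),
      fun a b c hab hbc => hpcon a b c (by exact_mod_cast hab) (by exact_mod_cast hbc)⟩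
  have hfs : Summable fun n : ℕ => p n := hps.comp_injective Nat.cast_injective
  have hf1 : ∑' n : ℕ, p n = 1 := by rw [← hp1, tsum_int_eq_tsum_natCast hneg]
  have hsum_nat (w : ℝ → ℝ) : ∑' n : ℤ, w n * p n = ∑' n : ℕ, w n * p n := by
    rw [tsum_int_eq_tsum_natCast fun n hn => by rw [hneg n hn, mul_zero]]
    simp only [Int.cast_natCast]
  have key := hf.rpow_moment_le hfs hf1 hr hrs
  rw [hsum_nat (· ^ s), hsum_nat (· ^ r), hsum_nat fun x => x]
  refine ⟨key, fun hmean => key.trans ?_⟩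
  have hμ : 1 ≤ (∑' n : ℕ, (n : ℝ) ^ r * p n) ^ (1 / r) :=
    one_le_rpow (hmean.trans (hf.tsum_natCast_mul_le hfs hf1 hr)) (by positivity)
  have hs : 0 ≤ s := by linarith
  exact mul_le_mul_of_nonneg_left (by linarith) (by positivity)
end
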